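/- arXiv:2508.00301 — 8 statements merged into one kernel-verified Lean document; each statement's English description precedes it below -/
import Mathlib

section
/- Let Ψ : Fin d₁ × Fin d₂ → ℂ be a unit vector (∑ |Ψ x|² = 1), let ρ be the outer-product matrix with entries ρ x y = Ψ x · conj(Ψ y), and let ρ₁ be the reduced matrix indexed by Fin d₁ with entries ρ₁ a a' = ∑_{b} ρ (a,b) (a',b). Then the linearized entropy satisfies the swap-trick identity 1 − Tr(ρ₁²) = 2 · Tr((ρ ⊗ ρ) · P₁₃⁻), where ρ ⊗ ρ is the Kronecker product indexed by the two-copy space. -/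
noncomputable section

open Matrix
open scoped Kronecker

/-- The swap `T₁₃` of subsystems 1 and 3 on the two-copy space. -/
def T13 (d₁ d₂ : ℕ) :
    Matrix ((Fin d₁ × Fin d₂) × (Fin d₁ × Fin d₂)) ((Fin d₁ × Fin d₂) × (Fin d₁ × Fin d₂)) ℂ :=
  Matrix.of fun x y =>
    if x.1.1 = y.2.1 ∧ x.2.1 = y.1.1 ∧ x.1.2 = y.1.2 ∧ x.2.2 = y.2.2 then 1 else 0

/-- The swap `T₂₄` of subsystems 2 and 4 on the two-copy space. -/
def T24 (d₁ d₂ : ℕ) :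
    Matrix ((Fin d₁ × Fin d₂) × (Fin d₁ × Fin d₂)) ((Fin d₁ × Fin d₂) × (Fin d₁ × Fin d₂)) ℂ :=
  Matrix.of fun x y =>
    if x.1.2 = y.2.2 ∧ x.2.2 = y.1.2 ∧ x.1.1 = y.1.1 ∧ x.2.1 = y.2.1 then 1 else 0

/-- `P₁₃⁺ = (1 + T₁₃)/2`. -/
def P13p (d₁ d₂ : ℕ) := (2 : ℂ)⁻¹ • (1 + T13 d₁ d₂)

/-- `P₁₃⁻ = (1 − T₁₃)/2`. -/
def P13m (d₁ d₂ : ℕ) := (2 : ℂ)⁻¹ • (1 - T13 d₁ d₂)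

/-- `P₂₄⁺ = (1 + T₂₄)/2`. -/
def P24p (d₁ d₂ : ℕ) := (2 : ℂ)⁻¹ • (1 + T24 d₁ d₂)

/-- The entangling power
`e(U) = (8/(d₁(d₁+1)d₂(d₂+1))) · Tr((U⊗U) P₁₃⁺ P₂₄⁺ (U⊗U)ᴴ P₁₃⁻)`. -/
def ePow (d₁ d₂ : ℕ) (U : Matrix (Fin d₁ × Fin d₂) (Fin d₁ × Fin d₂) ℂ) : ℂ :=
  (8 / ((d₁ : ℂ) * ((d₁ : ℂ) + 1) * (d₂ : ℂ) * ((d₂ : ℂ) + 1))) *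
    ((U ⊗ₖ U) * P13p d₁ d₂ * P24p d₁ d₂ * (U ⊗ₖ U)ᴴ * P13m d₁ d₂).trace

/-- Swap-trick identity for the linearized entropy: for a unit vector `Ψ` with
outer-product matrix `ρ` and reduced matrix `ρ₁`, one has
`1 − Tr(ρ₁²) = 2 · Tr((ρ ⊗ ρ) · P₁₃⁻)`. -/
theorem linearized_entropy_swap_trick (d₁ d₂ : ℕ) (hd₁ : 0 < d₁) (hd₂ : 0 < d₂)
    (Ψ : Fin d₁ × Fin d₂ → ℂ) (hΨ : ∑ x, Complex.normSq (Ψ x) = 1)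
    (ρ : Matrix (Fin d₁ × Fin d₂) (Fin d₁ × Fin d₂) ℂ)
    (hρ : ρ = Matrix.of fun x y => Ψ x * (starRingEnd ℂ) (Ψ y))
    (ρ₁ : Matrix (Fin d₁) (Fin d₁) ℂ)
    (hρ₁ : ρ₁ = Matrix.of fun a a' => ∑ b, ρ (a, b) (a', b)) :
    1 - (ρ₁ * ρ₁).trace = 2 * ((ρ ⊗ₖ ρ) * P13m d₁ d₂).trace := by
  have htr : ρ.trace = 1 := by
    subst hρ
    simp only [Matrix.trace, Matrix.diag, Matrix.of_apply, Complex.mul_conj]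
    rw [← Complex.ofReal_sum, hΨ, Complex.ofReal_one]
  have hT : ((ρ ⊗ₖ ρ) * T13 d₁ d₂).trace = (ρ₁ * ρ₁).trace := by
    have h13 : ∀ x y : (Fin d₁ × Fin d₂) × (Fin d₁ × Fin d₂),
        T13 d₁ d₂ y x = if y = ((x.2.1, x.1.2), (x.1.1, x.2.2)) then 1 else 0 := by
      intro x y
      simp only [T13, Matrix.of_apply, Prod.ext_iff]
      congr 1
      simp only [eq_iff_iff]
      tauto
    subst hρ₁
    simp only [Matrix.trace, Matrix.diag, Matrix.mul_apply, h13, mul_ite, mul_one, mul_zero,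
      Finset.sum_ite_eq', Finset.mem_univ, if_true, Matrix.of_apply, Matrix.kroneckerMap_apply,
      Finset.sum_mul_sum]
    rw [Fintype.sum_prod_type]
    simp only [Fintype.sum_prod_type]
    refine Finset.sum_congr rfl fun a _ => ?_
    rw [Finset.sum_comm]
  have hP : 2 * ((ρ ⊗ₖ ρ) * P13m d₁ d₂).trace
      = (ρ ⊗ₖ ρ).trace - ((ρ ⊗ₖ ρ) * T13 d₁ d₂).trace := by
    simp [P13m, Matrix.mul_smul, Matrix.mul_sub, Matrix.trace_sub, Matrix.trace_smul,
      smul_eq_mul, mul_sub]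
    try ring
  rw [hP, Matrix.trace_kronecker, htr, hT]
  ring
end
end

section
/- (Theorem 1) Let U be a unitary matrix indexed by Fin d₁ × Fin d₂. If either (i) (U ⊗ U) · P₁₃⁺ = P₁₃⁺ · (U ⊗ U), or (ii) (U ⊗ U) · (P₁₃⁺ · P₂₄⁺) = (P₁₃⁺ · P₂₄⁺) · (U ⊗ U), then the entangling power vanishes: e(U) = 0. -/
noncomputable section

open Matrix
open scoped Kronecker

lemma T13_eq (d₁ d₂ : ℕ) : T13 d₁ d₂ = Matrix.of fun x y =>
    if x = ((y.2.1, y.1.2), (y.1.1, y.2.2)) then 1 else 0 := by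
  ext x y
  simp only [T13, Matrix.of_apply, Prod.ext_iff]
  aesop

lemma T13_sq (d₁ d₂ : ℕ) : T13 d₁ d₂ * T13 d₁ d₂ = 1 := by
  rw [T13_eq]
  ext x y
  rw [Matrix.mul_apply]
  simp only [Matrix.of_apply, mul_ite, mul_one, mul_zero, ite_mul, one_mul, zero_mul,
    Finset.sum_ite_eq', Finset.mem_univ, if_true, Matrix.one_apply]

lemma kron_conjT {m n p q : Type*} (A : Matrix m n ℂ) (B : Matrix p q ℂ) :
    (A ⊗ₖ B)ᴴ = Aᴴ ⊗ₖ Bᴴ := by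
  ext x y
  simp [Matrix.conjTranspose_apply, Matrix.kroneckerMap_apply, mul_comm]

lemma P13m_mul_P13p (d₁ d₂ : ℕ) : P13m d₁ d₂ * P13p d₁ d₂ = 0 := by
  have h : (1 - T13 d₁ d₂) * (1 + T13 d₁ d₂) = 0 := by
    rw [sub_mul, mul_add, mul_add, one_mul, mul_one, T13_sq]; noncomm_ring
  rw [P13m, P13p, Matrix.smul_mul, Matrix.mul_smul, h, smul_zero, smul_zero]

/-- (Theorem 1) If `U ⊗ U` commutes with `P₁₃⁺` or with `P₁₃⁺ · P₂₄⁺`, then the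
entangling power of `U` vanishes. -/
theorem ePow_eq_zero_of_commute (d₁ d₂ : ℕ) (hd₁ : 0 < d₁) (hd₂ : 0 < d₂)
    (U : Matrix (Fin d₁ × Fin d₂) (Fin d₁ × Fin d₂) ℂ) (hU : Uᴴ * U = 1)
    (h : (U ⊗ₖ U) * P13p d₁ d₂ = P13p d₁ d₂ * (U ⊗ₖ U) ∨
         (U ⊗ₖ U) * (P13p d₁ d₂ * P24p d₁ d₂) = (P13p d₁ d₂ * P24p d₁ d₂) * (U ⊗ₖ U)) :
    ePow d₁ d₂ U = 0 := by
  suffices hT : ((U ⊗ₖ U) * P13p d₁ d₂ * P24p d₁ d₂ * (U ⊗ₖ U)ᴴ * P13m d₁ d₂).trace = 0 by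
    rw [ePow, hT, mul_zero]
  rcases h with h1 | h2
  · have : (U ⊗ₖ U) * P13p d₁ d₂ * P24p d₁ d₂ * (U ⊗ₖ U)ᴴ * P13m d₁ d₂ =
        P13p d₁ d₂ * ((U ⊗ₖ U) * P24p d₁ d₂ * (U ⊗ₖ U)ᴴ * P13m d₁ d₂) := by
      rw [h1]; noncomm_ring
    rw [this, Matrix.trace_mul_comm]
    have : (U ⊗ₖ U) * P24p d₁ d₂ * (U ⊗ₖ U)ᴴ * P13m d₁ d₂ * P13p d₁ d₂ =
        (U ⊗ₖ U) * P24p d₁ d₂ * (U ⊗ₖ U)ᴴ * (P13m d₁ d₂ * P13p d₁ d₂) := by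
      noncomm_ring
    rw [this, P13m_mul_P13p, mul_zero, Matrix.trace_zero]
  · have hUU : (U ⊗ₖ U) * (U ⊗ₖ U)ᴴ = 1 := by
      have hU' : U * Uᴴ = 1 := mul_eq_one_comm.mp hU
      rw [kron_conjT, ← Matrix.mul_kronecker_mul, hU', Matrix.one_kronecker_one]
    have : (U ⊗ₖ U) * P13p d₁ d₂ * P24p d₁ d₂ * (U ⊗ₖ U)ᴴ * P13m d₁ d₂ =
        P13p d₁ d₂ * (P24p d₁ d₂ * P13m d₁ d₂) := by
      calc (U ⊗ₖ U) * P13p d₁ d₂ * P24p d₁ d₂ * (U ⊗ₖ U)ᴴ * P13m d₁ d₂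
          = (U ⊗ₖ U) * (P13p d₁ d₂ * P24p d₁ d₂) * (U ⊗ₖ U)ᴴ * P13m d₁ d₂ := by noncomm_ring
        _ = P13p d₁ d₂ * P24p d₁ d₂ * ((U ⊗ₖ U) * (U ⊗ₖ U)ᴴ) * P13m d₁ d₂ := by
            rw [h2]; noncomm_ring
        _ = P13p d₁ d₂ * (P24p d₁ d₂ * P13m d₁ d₂) := by rw [hUU]; noncomm_ring
    rw [this, Matrix.trace_mul_comm, mul_assoc, P13m_mul_P13p, mul_zero, Matrix.trace_zero]
end
end

section
/- (Proposition 2) Let U be a unitary matrix indexed by Fin d₁ × Fin d₂. Define the linear operator entanglement entropies E(U) := 1 − (1/(d₁²·d₂²)) · Tr((U ⊗ U) · T₁₃ · (U ⊗ U)ᴴ · T₁₃) and Ẽ(U) := 1 − (1/(d₁²·d₂²)) · Tr((U ⊗ U) · T₂₄ · (U ⊗ U)ᴴ · T₁₃). Then the entangling power satisfies e(U) = (d₁·d₂/((d₁+1)·(d₂+1))) · (E(U) + Ẽ(U) + 1/(d₁·d₂) − 1). -/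
noncomputable section

open Matrix
open scoped Kronecker

variable {d₁ d₂ : ℕ}

lemma mul_T13_apply (M : Matrix ((Fin d₁ × Fin d₂) × (Fin d₁ × Fin d₂)) ((Fin d₁ × Fin d₂) × (Fin d₁ × Fin d₂)) ℂ)
    (x y : (Fin d₁ × Fin d₂) × (Fin d₁ × Fin d₂)) :
    (M * T13 d₁ d₂) x y = M x ((y.2.1, y.1.2), (y.1.1, y.2.2)) := by
  rw [Matrix.mul_apply, Finset.sum_eq_single (((y.2.1, y.1.2), (y.1.1, y.2.2)) : (Fin d₁ × Fin d₂) × (Fin d₁ × Fin d₂))]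
  · simp [T13]
  · rintro ⟨⟨a,b⟩,⟨c,e⟩⟩ - hz
    simp only [T13, of_apply]
    rw [if_neg, mul_zero]
    rintro ⟨h1,h2,h3,h4⟩
    exact hz (by simp_all)
  · simp

lemma T13_mul_apply (M : Matrix ((Fin d₁ × Fin d₂) × (Fin d₁ × Fin d₂)) ((Fin d₁ × Fin d₂) × (Fin d₁ × Fin d₂)) ℂ)
    (x y : (Fin d₁ × Fin d₂) × (Fin d₁ × Fin d₂)) :
    (T13 d₁ d₂ * M) x y = M ((x.2.1, x.1.2), (x.1.1, x.2.2)) y := by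
  rw [Matrix.mul_apply, Finset.sum_eq_single (((x.2.1, x.1.2), (x.1.1, x.2.2)) : (Fin d₁ × Fin d₂) × (Fin d₁ × Fin d₂))]
  · simp [T13]
  · rintro ⟨⟨a,b⟩,⟨c,e⟩⟩ - hz
    simp only [T13, of_apply]
    rw [if_neg, zero_mul]
    rintro ⟨h1,h2,h3,h4⟩
    exact hz (by simp_all)
  · simp

lemma mul_T24_apply (M : Matrix ((Fin d₁ × Fin d₂) × (Fin d₁ × Fin d₂)) ((Fin d₁ × Fin d₂) × (Fin d₁ × Fin d₂)) ℂ)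
    (x y : (Fin d₁ × Fin d₂) × (Fin d₁ × Fin d₂)) :
    (M * T24 d₁ d₂) x y = M x ((y.1.1, y.2.2), (y.2.1, y.1.2)) := by
  rw [Matrix.mul_apply, Finset.sum_eq_single (((y.1.1, y.2.2), (y.2.1, y.1.2)) : (Fin d₁ × Fin d₂) × (Fin d₁ × Fin d₂))]
  · simp [T24]
  · rintro ⟨⟨a,b⟩,⟨c,e⟩⟩ - hz
    simp only [T24, of_apply]
    rw [if_neg, mul_zero]
    rintro ⟨h1,h2,h3,h4⟩
    exact hz (by simp_all)
  · simp

lemma T24_mul_apply (M : Matrix ((Fin d₁ × Fin d₂) × (Fin d₁ × Fin d₂)) ((Fin d₁ × Fin d₂) × (Fin d₁ × Fin d₂)) ℂ)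
    (x y : (Fin d₁ × Fin d₂) × (Fin d₁ × Fin d₂)) :
    (T24 d₁ d₂ * M) x y = M ((x.1.1, x.2.2), (x.2.1, x.1.2)) y := by
  rw [Matrix.mul_apply, Finset.sum_eq_single (((x.1.1, x.2.2), (x.2.1, x.1.2)) : (Fin d₁ × Fin d₂) × (Fin d₁ × Fin d₂))]
  · simp [T24]
  · rintro ⟨⟨a,b⟩,⟨c,e⟩⟩ - hz
    simp only [T24, of_apply]
    rw [if_neg, zero_mul]
    rintro ⟨h1,h2,h3,h4⟩
    exact hz (by simp_all)
  · simp

lemma T13_mul_T13 : T13 d₁ d₂ * T13 d₁ d₂ = 1 := by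
  ext x y
  rw [mul_T13_apply]
  simp only [T13, of_apply, one_apply, Prod.ext_iff]
  exact if_congr (by tauto) rfl rfl

lemma trace_T13 : (T13 d₁ d₂).trace = (d₁ : ℂ) * (d₂ : ℂ)^2 := by
  have h : ∀ x : (Fin d₁ × Fin d₂) × (Fin d₁ × Fin d₂),
      T13 d₁ d₂ x x = if x.1.1 = x.2.1 then (1:ℂ) else 0 := by
    intro x; exact if_congr (by tauto) rfl rfl
  simp only [Matrix.trace, Matrix.diag, h]
  simp only [Fintype.sum_prod_type]
  show (∑ a : Fin d₁, ∑ _ : Fin d₂, ∑ c : Fin d₁, ∑ _ : Fin d₂, if a = c then (1:ℂ) else 0)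
      = (d₁:ℂ) * (d₂:ℂ)^2
  simp only [Finset.sum_const, Finset.card_univ, Fintype.card_fin, nsmul_eq_mul, mul_ite, mul_one,
    mul_zero, Finset.sum_ite_eq, Finset.mem_univ, if_true]
  ring

lemma trace_T24 : (T24 d₁ d₂).trace = (d₁ : ℂ)^2 * (d₂ : ℂ) := by
  have h : ∀ x : (Fin d₁ × Fin d₂) × (Fin d₁ × Fin d₂),
      T24 d₁ d₂ x x = if x.1.2 = x.2.2 then (1:ℂ) else 0 := by
    intro x; exact if_congr (by tauto) rfl rfl
  simp only [Matrix.trace, Matrix.diag, h]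
  simp only [Fintype.sum_prod_type]
  show (∑ _ : Fin d₁, ∑ b : Fin d₂, ∑ _ : Fin d₁, ∑ e : Fin d₂, if b = e then (1:ℂ) else 0)
      = (d₁:ℂ)^2 * (d₂:ℂ)
  simp only [Finset.sum_const, Finset.card_univ, Fintype.card_fin, nsmul_eq_mul, mul_ite, mul_one,
    mul_zero, Finset.sum_ite_eq, Finset.mem_univ, if_true]
  ring

lemma trace_T13_mul_T24 : (T13 d₁ d₂ * T24 d₁ d₂).trace = (d₁ : ℂ) * (d₂ : ℂ) := by
  have h : ∀ x : (Fin d₁ × Fin d₂) × (Fin d₁ × Fin d₂),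
      (T13 d₁ d₂ * T24 d₁ d₂) x x = if x.1.2 = x.2.2 ∧ x.1.1 = x.2.1 then (1:ℂ) else 0 := by
    intro x
    rw [mul_T24_apply]
    simp only [T13, of_apply]
    refine if_congr ⟨?_, ?_⟩ rfl rfl
    · rintro ⟨h1,h2,h3,h4⟩; exact ⟨h3,h1⟩
    · rintro ⟨h1,h2⟩; exact ⟨h2,h2.symm,h1,h1.symm⟩
  simp only [Matrix.trace, Matrix.diag, h]
  simp only [Fintype.sum_prod_type]
  show (∑ a : Fin d₁, ∑ b : Fin d₂, ∑ c : Fin d₁, ∑ e : Fin d₂, if b = e ∧ a = c then (1:ℂ) else 0)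
      = (d₁:ℂ) * (d₂:ℂ)
  simp only [ite_and, Finset.sum_const, Finset.card_univ, Fintype.card_fin, nsmul_eq_mul, mul_ite,
    mul_one, mul_zero, Finset.sum_ite_eq, Finset.mem_univ, if_true]

open scoped Kronecker

lemma conjT_kron {m n : Type*} [Fintype m] [Fintype n] (A : Matrix m m ℂ) (B : Matrix n n ℂ) :
    (A ⊗ₖ B)ᴴ = Aᴴ ⊗ₖ Bᴴ := by
  ext ⟨a,b⟩ ⟨c,e⟩
  simp [conjTranspose_apply, mul_comm]

lemma T13_comm_T24 : T13 d₁ d₂ * T24 d₁ d₂ = T24 d₁ d₂ * T13 d₁ d₂ := by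
  ext x y
  rw [mul_T24_apply, mul_T13_apply]
  simp only [T13, T24, of_apply]
  exact if_congr (by tauto) rfl rfl

lemma kron_comm_S (U : Matrix (Fin d₁ × Fin d₂) (Fin d₁ × Fin d₂) ℂ) :
    (U ⊗ₖ U) * (T13 d₁ d₂ * T24 d₁ d₂) = (T13 d₁ d₂ * T24 d₁ d₂) * (U ⊗ₖ U) := by
  rw [← Matrix.mul_assoc, Matrix.mul_assoc (T13 d₁ d₂)]
  ext x y
  rw [mul_T24_apply, mul_T13_apply, T13_mul_apply, T24_mul_apply]
  show (U ⊗ₖ U) x ((y.2.1, y.2.2), (y.1.1, y.1.2)) = (U ⊗ₖ U) ((x.2.1, x.2.2), (x.1.1, x.1.2)) y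
  simp only [Matrix.kroneckerMap_apply]
  exact mul_comm _ _

/-- (Proposition 2) The entangling power in terms of the linear operator entanglement
entropies `E(U)` and `Ẽ(U)`. -/
theorem ePow_eq_operator_entropies (d₁ d₂ : ℕ) (hd₁ : 0 < d₁) (hd₂ : 0 < d₂)
    (U : Matrix (Fin d₁ × Fin d₂) (Fin d₁ × Fin d₂) ℂ) (hU : Uᴴ * U = 1)
    (E Et : ℂ)
    (hE : E = 1 - (1 / ((d₁ : ℂ) ^ 2 * (d₂ : ℂ) ^ 2)) *
      ((U ⊗ₖ U) * T13 d₁ d₂ * (U ⊗ₖ U)ᴴ * T13 d₁ d₂).trace)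
    (hEt : Et = 1 - (1 / ((d₁ : ℂ) ^ 2 * (d₂ : ℂ) ^ 2)) *
      ((U ⊗ₖ U) * T24 d₁ d₂ * (U ⊗ₖ U)ᴴ * T13 d₁ d₂).trace) :
    ePow d₁ d₂ U = ((d₁ : ℂ) * (d₂ : ℂ) / (((d₁ : ℂ) + 1) * ((d₂ : ℂ) + 1))) *
      (E + Et + 1 / ((d₁ : ℂ) * (d₂ : ℂ)) - 1) := by
  have hU' : U * Uᴴ = 1 := mul_eq_one_comm.mp hU
  have hVV : (U ⊗ₖ U) * (U ⊗ₖ U)ᴴ = 1 := by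
    rw [conjT_kron, ← mul_kronecker_mul, hU', one_kronecker_one]
  have hVV' : (U ⊗ₖ U)ᴴ * (U ⊗ₖ U) = 1 := by
    rw [conjT_kron, ← mul_kronecker_mul, hU, one_kronecker_one]
  have hM : (U ⊗ₖ U) * P13p d₁ d₂ * P24p d₁ d₂ * (U ⊗ₖ U)ᴴ * P13m d₁ d₂ =
      (8:ℂ)⁻¹ • ((U ⊗ₖ U) * (U ⊗ₖ U)ᴴ + (U ⊗ₖ U) * T13 d₁ d₂ * (U ⊗ₖ U)ᴴ
        + (U ⊗ₖ U) * T24 d₁ d₂ * (U ⊗ₖ U)ᴴ + (U ⊗ₖ U) * (T13 d₁ d₂ * T24 d₁ d₂) * (U ⊗ₖ U)ᴴ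
        - (U ⊗ₖ U) * (U ⊗ₖ U)ᴴ * T13 d₁ d₂ - (U ⊗ₖ U) * T13 d₁ d₂ * (U ⊗ₖ U)ᴴ * T13 d₁ d₂
        - (U ⊗ₖ U) * T24 d₁ d₂ * (U ⊗ₖ U)ᴴ * T13 d₁ d₂
        - (U ⊗ₖ U) * (T13 d₁ d₂ * T24 d₁ d₂) * (U ⊗ₖ U)ᴴ * T13 d₁ d₂) := by
    simp only [P13p, P24p, P13m, Matrix.smul_mul, Matrix.mul_smul, Matrix.mul_add, Matrix.add_mul,
      Matrix.mul_sub, Matrix.sub_mul, Matrix.mul_one, Matrix.one_mul, smul_smul, Matrix.mul_assoc,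
      smul_add, smul_sub]
    module
  have h1 : ((U ⊗ₖ U) * (U ⊗ₖ U)ᴴ).trace = ((d₁:ℂ) * (d₂:ℂ))^2 := by
    rw [hVV, Matrix.trace_one]
    simp [Fintype.card_prod]
    ring
  have h2 : ((U ⊗ₖ U) * T13 d₁ d₂ * (U ⊗ₖ U)ᴴ).trace = (d₁:ℂ) * (d₂:ℂ)^2 := by
    rw [Matrix.trace_mul_cycle, hVV', Matrix.one_mul, trace_T13]
  have h3 : ((U ⊗ₖ U) * T24 d₁ d₂ * (U ⊗ₖ U)ᴴ).trace = (d₁:ℂ)^2 * (d₂:ℂ) := by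
    rw [Matrix.trace_mul_cycle, hVV', Matrix.one_mul, trace_T24]
  have h4 : ((U ⊗ₖ U) * (T13 d₁ d₂ * T24 d₁ d₂) * (U ⊗ₖ U)ᴴ).trace = (d₁:ℂ) * (d₂:ℂ) := by
    rw [Matrix.trace_mul_cycle, hVV', Matrix.one_mul, trace_T13_mul_T24]
  have h5 : ((U ⊗ₖ U) * (U ⊗ₖ U)ᴴ * T13 d₁ d₂).trace = (d₁:ℂ) * (d₂:ℂ)^2 := by
    rw [hVV, Matrix.one_mul, trace_T13]
  have h8 : ((U ⊗ₖ U) * (T13 d₁ d₂ * T24 d₁ d₂) * (U ⊗ₖ U)ᴴ * T13 d₁ d₂).trace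
      = (d₁:ℂ)^2 * (d₂:ℂ) := by
    rw [kron_comm_S, Matrix.mul_assoc (T13 d₁ d₂ * T24 d₁ d₂), hVV, Matrix.mul_one,
      Matrix.trace_mul_comm, ← Matrix.mul_assoc, T13_mul_T13, Matrix.one_mul, trace_T24]
  have hd₁' : (d₁ : ℂ) ≠ 0 := Nat.cast_ne_zero.mpr hd₁.ne'
  have hd₂' : (d₂ : ℂ) ≠ 0 := Nat.cast_ne_zero.mpr hd₂.ne'
  have hd₁1 : (d₁ : ℂ) + 1 ≠ 0 := by
    have : ((d₁ + 1 : ℕ) : ℂ) ≠ 0 := Nat.cast_ne_zero.mpr d₁.succ_ne_zero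
    push_cast at this; exact this
  have hd₂1 : (d₂ : ℂ) + 1 ≠ 0 := by
    have : ((d₂ + 1 : ℕ) : ℂ) ≠ 0 := Nat.cast_ne_zero.mpr d₂.succ_ne_zero
    push_cast at this; exact this
  rw [ePow, hM, Matrix.trace_smul]
  simp only [Matrix.trace_sub, Matrix.trace_add]
  rw [h1, h2, h3, h4, h5, h8, hE, hEt, smul_eq_mul]
  have hq : ((d₁:ℂ) * (↑d₁ + 1) * ↑d₂ * (↑d₂ + 1) * 8 : ℂ) ≠ 0 := by
    exact mul_ne_zero (mul_ne_zero (mul_ne_zero (mul_ne_zero hd₁' hd₁1) hd₂') hd₂1) (by norm_num)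
  have hs : (((d₁:ℂ) + 1) * (↑d₂ + 1) * (↑d₁ ^ 2 * ↑d₂ ^ 2 * (↑d₁ * ↑d₂)) : ℂ) ≠ 0 := by
    exact mul_ne_zero (mul_ne_zero hd₁1 hd₂1)
      (mul_ne_zero (mul_ne_zero (pow_ne_zero _ hd₁') (pow_ne_zero _ hd₂')) (mul_ne_zero hd₁' hd₂'))
  field_simp
  ring
end
end

section
/- (Proposition 3) Let U be a unitary matrix indexed by Fin d₁ × Fin d₂. For a matrix P on the four-copy space, define F(P) := ∑_{σ₁} ∑_{σ₂} Tr(U^{⊗4} · V(σ₁) · V(σ₂) · (U^{⊗4})ᴴ · P), where σ₁ ranges over all 24 permutations of the odd positions {1,3,5,7} and σ₂ over all 24 permutations of the even positions {2,4,6,8}, with V(σ₁), V(σ₂) the induced permutation operators. Then 4·(4!)²·Tr(U^{⊗4} · P₁₃₅₇⁺ · P₂₄₆₈⁺ · (U^{⊗4})ᴴ · P₁₃⁻ · P₅₇⁻) = F(1) − 2·F(T₁₃) + F(T₁₃·T₅₇); in particular Δ²(U) = D_{d₁}·D_{d₂}·(F(1) − 2·F(T₁₃) + F(T₁₃·T₅₇))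 − e(U)². -/
noncomputable section

open Matrix
open scoped Kronecker

/-- The permutation operator on the four-copy space induced by a permutation `σ` of the
four odd positions {1,3,5,7}: it permutes the four `Fin d₁` factors according to `σ`
while fixing all `Fin d₂` factors. -/
def Vodd (d₁ d₂ : ℕ) (σ : Equiv.Perm (Fin 4)) :
    Matrix (Fin 4 → Fin d₁ × Fin d₂) (Fin 4 → Fin d₁ × Fin d₂) ℂ :=
  Matrix.of fun f g =>
    if (∀ i, (f i).1 = (g (σ⁻¹ i)).1) ∧ (∀ i, (f i).2 = (g i).2) then 1 else 0

/-- The permutation operator on the four-copy space induced by a permutation `σ` of the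
four even positions {2,4,6,8}: it permutes the four `Fin d₂` factors according to `σ`
while fixing all `Fin d₁` factors. -/
def Veven (d₁ d₂ : ℕ) (σ : Equiv.Perm (Fin 4)) :
    Matrix (Fin 4 → Fin d₁ × Fin d₂) (Fin 4 → Fin d₁ × Fin d₂) ℂ :=
  Matrix.of fun f g =>
    if (∀ i, (f i).2 = (g (σ⁻¹ i)).2) ∧ (∀ i, (f i).1 = (g i).1) then 1 else 0

/-- `P₁₃₅₇⁺`: the average of the 24 permutation operators over all permutations of the
odd positions {1,3,5,7}. -/
def P1357 (d₁ d₂ : ℕ) :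
    Matrix (Fin 4 → Fin d₁ × Fin d₂) (Fin 4 → Fin d₁ × Fin d₂) ℂ :=
  ((Nat.factorial 4 : ℂ))⁻¹ • ∑ σ : Equiv.Perm (Fin 4), Vodd d₁ d₂ σ

/-- `P₂₄₆₈⁺`: the average of the 24 permutation operators over all permutations of the
even positions {2,4,6,8}. -/
def P2468 (d₁ d₂ : ℕ) :
    Matrix (Fin 4 → Fin d₁ × Fin d₂) (Fin 4 → Fin d₁ × Fin d₂) ℂ :=
  ((Nat.factorial 4 : ℂ))⁻¹ • ∑ σ : Equiv.Perm (Fin 4), Veven d₁ d₂ σ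

/-- `T₁₃` on the four-copy space: the swap of subsystems 1 and 3. -/
def T13c (d₁ d₂ : ℕ) := Vodd d₁ d₂ (Equiv.swap (0 : Fin 4) 1)

/-- `T₅₇` on the four-copy space: the swap of subsystems 5 and 7. -/
def T57c (d₁ d₂ : ℕ) := Vodd d₁ d₂ (Equiv.swap (2 : Fin 4) 3)

/-- `P₁₃⁻ = (1 − T₁₃)/2` on the four-copy space. -/
def P13mc (d₁ d₂ : ℕ) := (2 : ℂ)⁻¹ • (1 - T13c d₁ d₂)

/-- `P₅₇⁻ = (1 − T₅₇)/2` on the four-copy space. -/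
def P57mc (d₁ d₂ : ℕ) := (2 : ℂ)⁻¹ • (1 - T57c d₁ d₂)

/-- The fourfold Kronecker power `U^{⊗4}`. -/
def kpow4 (d₁ d₂ : ℕ) (U : Matrix (Fin d₁ × Fin d₂) (Fin d₁ × Fin d₂) ℂ) :
    Matrix (Fin 4 → Fin d₁ × Fin d₂) (Fin 4 → Fin d₁ × Fin d₂) ℂ :=
  Matrix.of fun f g => ∏ i, U (f i) (g i)

/-- `D_d = 1/(d(d+1)(d+2)(d+3))`. -/
def Dc (d : ℕ) : ℂ := 1 / ((d : ℂ) * ((d : ℂ) + 1) * ((d : ℂ) + 2) * ((d : ℂ) + 3))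

/-- The squared entangling power deviation
`Δ²(U) = 4·(4!)²·D_{d₁}·D_{d₂}·Tr(U^{⊗4} P₁₃₅₇⁺ P₂₄₆₈⁺ (U^{⊗4})ᴴ P₁₃⁻ P₅₇⁻) − e(U)²`. -/
def deltaSq (d₁ d₂ : ℕ) (U : Matrix (Fin d₁ × Fin d₂) (Fin d₁ × Fin d₂) ℂ) : ℂ :=
  4 * (Nat.factorial 4 : ℂ) ^ 2 * Dc d₁ * Dc d₂ *
      (kpow4 d₁ d₂ U * P1357 d₁ d₂ * P2468 d₁ d₂ * (kpow4 d₁ d₂ U)ᴴ *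
        P13mc d₁ d₂ * P57mc d₁ d₂).trace -
    (ePow d₁ d₂ U) ^ 2

namespace Prop3Aux

/-- The permutation `(0 2)(1 3)` of `Fin 4`. -/
def tau : Equiv.Perm (Fin 4) := Equiv.swap 0 2 * Equiv.swap 1 3

lemma tau_tau (i : Fin 4) : tau (tau i) = i := by revert i; decide

lemma tau_sq : tau * tau = 1 := Equiv.ext fun i => by
  simpa [Equiv.Perm.mul_apply] using tau_tau i

lemma tau_inv : tau⁻¹ = tau := inv_eq_of_mul_eq_one_left tau_sq

lemma comp_tau_comp {α : Type*} (f : Fin 4 → α) : (f ∘ tau) ∘ tau = f :=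
  funext fun i => by simp [Function.comp, tau_tau]

lemma eq_comp_tau_comm {α : Type*} (f g : Fin 4 → α) : f = g ∘ tau ↔ g = f ∘ tau :=
  ⟨fun h => by rw [h, comp_tau_comp], fun h => by rw [h, comp_tau_comp]⟩

variable (d₁ d₂ : ℕ)

/-- The operator permuting the four full factors by `tau`. -/
def Wm : Matrix (Fin 4 → Fin d₁ × Fin d₂) (Fin 4 → Fin d₁ × Fin d₂) ℂ :=
  Matrix.of fun f g => if f = g ∘ tau then 1 else 0

lemma mul_Wm (M : Matrix (Fin 4 → Fin d₁ × Fin d₂) (Fin 4 → Fin d₁ × Fin d₂) ℂ) :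
    M * Wm d₁ d₂ = Matrix.of fun f g => M f (g ∘ tau) := by
  ext f g
  rw [Matrix.mul_apply]
  simp only [Wm, Matrix.of_apply, mul_ite, mul_one, mul_zero]
  rw [Finset.sum_ite_eq' Finset.univ (g ∘ tau) (fun h => M f h)]
  simp

lemma Wm_mul (M : Matrix (Fin 4 → Fin d₁ × Fin d₂) (Fin 4 → Fin d₁ × Fin d₂) ℂ) :
    Wm d₁ d₂ * M = Matrix.of fun f g => M (f ∘ tau) g := by
  ext f g
  rw [Matrix.mul_apply]
  have hW : ∀ h, Wm d₁ d₂ f h = if h = f ∘ tau then (1 : ℂ) else 0 := fun h => by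
    simp only [Wm, Matrix.of_apply]
    exact if_congr (eq_comp_tau_comm f h) rfl rfl
  simp only [hW, ite_mul, one_mul, zero_mul]
  rw [Finset.sum_ite_eq' Finset.univ (f ∘ tau) (fun h => M h g)]
  simp

lemma Wm_Wm : Wm d₁ d₂ * Wm d₁ d₂ = 1 := by
  rw [Wm_mul]
  ext f g
  simp only [Wm, Matrix.of_apply, Matrix.one_apply]
  refine if_congr ?_ rfl rfl
  constructor
  · intro h
    have := congrArg (fun p => p ∘ tau) h
    simpa [comp_tau_comp] using this
  · intro h; rw [h]

lemma Wm_conjTranspose : (Wm d₁ d₂)ᴴ = Wm d₁ d₂ := by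
  ext f g
  simp only [Matrix.conjTranspose_apply, Wm, Matrix.of_apply]
  rw [if_congr (eq_comp_tau_comm g f) rfl rfl]
  split <;> simp

lemma Wm_comm_kpow4 (U : Matrix (Fin d₁ × Fin d₂) (Fin d₁ × Fin d₂) ℂ) :
    Wm d₁ d₂ * kpow4 d₁ d₂ U = kpow4 d₁ d₂ U * Wm d₁ d₂ := by
  rw [Wm_mul, mul_Wm]
  ext f g
  simp only [Matrix.of_apply, kpow4, Function.comp]
  calc ∏ i, U (f (tau i)) (g i)
      = ∏ i, U (f (tau i)) (g (tau (tau i))) := by simp [tau_tau]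
    _ = ∏ i, U (f i) (g (tau i)) := Equiv.prod_comp tau (fun j => U (f j) (g (tau j)))

lemma Wm_Vodd (σ : Equiv.Perm (Fin 4)) :
    Wm d₁ d₂ * Vodd d₁ d₂ σ * Wm d₁ d₂ = Vodd d₁ d₂ (tau * σ * tau) := by
  rw [mul_Wm, Wm_mul]
  ext f g
  simp only [Matrix.of_apply, Vodd, Function.comp]
  refine if_congr ?_ rfl rfl
  have hinv : ∀ i, (tau * σ * tau)⁻¹ i = tau (σ⁻¹ (tau i)) := fun i => by
    simp [_root_.mul_inv_rev, tau_inv, Equiv.Perm.mul_apply]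
  constructor
  · rintro ⟨h1, h2⟩
    refine ⟨fun i => ?_, fun i => ?_⟩
    · rw [hinv]; have := h1 (tau i); simpa [tau_tau] using this
    · have := h2 (tau i); simpa [tau_tau] using this
  · rintro ⟨h1, h2⟩
    refine ⟨fun i => ?_, fun i => ?_⟩
    · have := h1 (tau i); rw [hinv, tau_tau] at this; exact this
    · exact h2 (tau i)

lemma Wm_Veven (σ : Equiv.Perm (Fin 4)) :
    Wm d₁ d₂ * Veven d₁ d₂ σ * Wm d₁ d₂ = Veven d₁ d₂ (tau * σ * tau) := by
  rw [mul_Wm, Wm_mul]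
  ext f g
  simp only [Matrix.of_apply, Veven, Function.comp]
  refine if_congr ?_ rfl rfl
  have hinv : ∀ i, (tau * σ * tau)⁻¹ i = tau (σ⁻¹ (tau i)) := fun i => by
    simp [_root_.mul_inv_rev, tau_inv, Equiv.Perm.mul_apply]
  constructor
  · rintro ⟨h1, h2⟩
    refine ⟨fun i => ?_, fun i => ?_⟩
    · rw [hinv]; have := h1 (tau i); simpa [tau_tau] using this
    · have := h2 (tau i); simpa [tau_tau] using this
  · rintro ⟨h1, h2⟩
    refine ⟨fun i => ?_, fun i => ?_⟩
    · have := h1 (tau i); rw [hinv, tau_tau] at this; exact this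
    · exact h2 (tau i)

lemma conj_comm_of_conj {n : Type*} [Fintype n] [DecidableEq n]
    {W M : Matrix n n ℂ} (hW : W * W = 1) (h : W * M * W = M) : W * M = M * W := by
  have h2 := congrArg (· * W) h
  rw [mul_assoc (W * M), hW, mul_one] at h2
  exact h2.symm ▸ rfl

lemma Wm_comm_P1357 : Wm d₁ d₂ * P1357 d₁ d₂ = P1357 d₁ d₂ * Wm d₁ d₂ := by
  refine conj_comm_of_conj (Wm_Wm d₁ d₂) ?_
  rw [P1357, Matrix.mul_smul, Matrix.smul_mul, Matrix.mul_sum, Matrix.sum_mul]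
  congr 1
  calc ∑ σ : Equiv.Perm (Fin 4), Wm d₁ d₂ * Vodd d₁ d₂ σ * Wm d₁ d₂
      = ∑ σ : Equiv.Perm (Fin 4), Vodd d₁ d₂ (tau * σ * tau) := by
        exact Finset.sum_congr rfl fun σ _ => Wm_Vodd d₁ d₂ σ
    _ = ∑ σ : Equiv.Perm (Fin 4), Vodd d₁ d₂ σ :=
        Fintype.sum_equiv ((Equiv.mulLeft tau).trans (Equiv.mulRight tau)) _ _ fun σ => rfl

lemma Wm_comm_P2468 : Wm d₁ d₂ * P2468 d₁ d₂ = P2468 d₁ d₂ * Wm d₁ d₂ := by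
  refine conj_comm_of_conj (Wm_Wm d₁ d₂) ?_
  rw [P2468, Matrix.mul_smul, Matrix.smul_mul, Matrix.mul_sum, Matrix.sum_mul]
  congr 1
  calc ∑ σ : Equiv.Perm (Fin 4), Wm d₁ d₂ * Veven d₁ d₂ σ * Wm d₁ d₂
      = ∑ σ : Equiv.Perm (Fin 4), Veven d₁ d₂ (tau * σ * tau) := by
        exact Finset.sum_congr rfl fun σ _ => Wm_Veven d₁ d₂ σ
    _ = ∑ σ : Equiv.Perm (Fin 4), Veven d₁ d₂ σ :=
        Fintype.sum_equiv ((Equiv.mulLeft tau).trans (Equiv.mulRight tau)) _ _ fun σ => rfl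

lemma commute_chain {n : Type*} [Fintype n] [DecidableEq n] (W a b : Matrix n n ℂ)
    (ha : W * a = a * W) (hb : W * b = b * W) : W * (a * b) = a * b * W := by
  rw [← mul_assoc, ha, mul_assoc, hb, ← mul_assoc]

lemma T57c_conj : T57c d₁ d₂ = Wm d₁ d₂ * T13c d₁ d₂ * Wm d₁ d₂ := by
  have h : tau * Equiv.swap (0 : Fin 4) 1 * tau = Equiv.swap 2 3 := by decide
  rw [T13c, T57c, Wm_Vodd, h]

end Prop3Aux

set_option maxHeartbeats 2000000 in
/-- (Proposition 3) With `F(P) = ∑_{σ₁,σ₂} Tr(U^{⊗4} V(σ₁) V(σ₂) (U^{⊗4})ᴴ P)`,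
`4·(4!)²·Tr(U^{⊗4} P₁₃₅₇⁺ P₂₄₆₈⁺ (U^{⊗4})ᴴ P₁₃⁻ P₅₇⁻) = F(1) − 2F(T₁₃) + F(T₁₃T₅₇)`,
and hence `Δ²(U) = D_{d₁} D_{d₂} (F(1) − 2F(T₁₃) + F(T₁₃T₅₇)) − e(U)²`. -/
theorem deltaSq_via_F (d₁ d₂ : ℕ) (hd₁ : 0 < d₁) (hd₂ : 0 < d₂)
    (U : Matrix (Fin d₁ × Fin d₂) (Fin d₁ × Fin d₂) ℂ) (hU : Uᴴ * U = 1)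
    (F : Matrix (Fin 4 → Fin d₁ × Fin d₂) (Fin 4 → Fin d₁ × Fin d₂) ℂ → ℂ)
    (hF : ∀ P : Matrix (Fin 4 → Fin d₁ × Fin d₂) (Fin 4 → Fin d₁ × Fin d₂) ℂ,
      F P = ∑ σ₁ : Equiv.Perm (Fin 4), ∑ σ₂ : Equiv.Perm (Fin 4),
        (kpow4 d₁ d₂ U * Vodd d₁ d₂ σ₁ * Veven d₁ d₂ σ₂ * (kpow4 d₁ d₂ U)ᴴ * P).trace) :
    4 * (Nat.factorial 4 : ℂ) ^ 2 *
        (kpow4 d₁ d₂ U * P1357 d₁ d₂ * P2468 d₁ d₂ * (kpow4 d₁ d₂ U)ᴴ *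
          P13mc d₁ d₂ * P57mc d₁ d₂).trace =
      F 1 - 2 * F (T13c d₁ d₂) + F (T13c d₁ d₂ * T57c d₁ d₂) ∧
    deltaSq d₁ d₂ U =
      Dc d₁ * Dc d₂ * (F 1 - 2 * F (T13c d₁ d₂) + F (T13c d₁ d₂ * T57c d₁ d₂)) -
        (ePow d₁ d₂ U) ^ 2 := by
  open Prop3Aux in
  have h24 : ((Nat.factorial 4 : ℂ)) = 24 := by norm_num [Nat.factorial]
  set k := kpow4 d₁ d₂ U with hk
  set A := k * P1357 d₁ d₂ * P2468 d₁ d₂ * kᴴ with hAdef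
  -- F in terms of the trace against A
  have hFA : ∀ P, F P = (Nat.factorial 4 : ℂ) * (Nat.factorial 4 : ℂ) * (A * P).trace := by
    intro P
    rw [hF]
    have : (A * P).trace
        = ((Nat.factorial 4 : ℂ))⁻¹ * ((Nat.factorial 4 : ℂ))⁻¹ *
          ∑ σ₁ : Equiv.Perm (Fin 4), ∑ σ₂ : Equiv.Perm (Fin 4),
            (k * Vodd d₁ d₂ σ₁ * Veven d₁ d₂ σ₂ * kᴴ * P).trace := by
      rw [hAdef, P1357, P2468]
      simp only [Matrix.mul_smul, Matrix.smul_mul, Matrix.mul_sum, Matrix.sum_mul,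
        Matrix.trace_smul, Matrix.trace_sum, smul_eq_mul, Finset.mul_sum, smul_smul]
      ring_nf
      rw [Finset.sum_comm]
    rw [this, h24]
    ring
  -- commutation of Wm with A
  have hcomm : Wm d₁ d₂ * A = A * Wm d₁ d₂ := by
    rw [hAdef]
    have h1 := Wm_comm_kpow4 d₁ d₂ U
    have h4 : Wm d₁ d₂ * kᴴ = kᴴ * Wm d₁ d₂ := by
      have := congrArg Matrix.conjTranspose h1
      rw [Matrix.conjTranspose_mul, Matrix.conjTranspose_mul, Wm_conjTranspose] at this
      rw [hk]
      exact this.symm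
    rw [show k * P1357 d₁ d₂ * P2468 d₁ d₂ * kᴴ
        = k * (P1357 d₁ d₂ * (P2468 d₁ d₂ * kᴴ)) by simp only [mul_assoc]]
    refine commute_chain _ _ _ (by rw [hk]; exact h1) ?_
    refine commute_chain _ _ _ (Wm_comm_P1357 d₁ d₂) ?_
    exact commute_chain _ _ _ (Wm_comm_P2468 d₁ d₂) h4
  -- symmetry: trace against T57c equals trace against T13c
  have hsym : (A * T57c d₁ d₂).trace = (A * T13c d₁ d₂).trace := by
    rw [T57c_conj]
    rw [show A * (Wm d₁ d₂ * T13c d₁ d₂ * Wm d₁ d₂)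
        = (A * Wm d₁ d₂ * T13c d₁ d₂) * Wm d₁ d₂ by simp only [mul_assoc]]
    rw [Matrix.trace_mul_comm]
    rw [show Wm d₁ d₂ * (A * Wm d₁ d₂ * T13c d₁ d₂)
        = Wm d₁ d₂ * A * Wm d₁ d₂ * T13c d₁ d₂ by simp only [mul_assoc]]
    rw [hcomm, mul_assoc A, Wm_Wm, mul_one]
  -- expansion of the projectors
  have hexp : A * P13mc d₁ d₂ * P57mc d₁ d₂
      = ((2 : ℂ)⁻¹ * (2 : ℂ)⁻¹) •
        (A * 1 - A * T57c d₁ d₂ - A * T13c d₁ d₂ + A * (T13c d₁ d₂ * T57c d₁ d₂)) := by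
    simp only [P13mc, P57mc, Matrix.mul_smul, Matrix.smul_mul, smul_smul]
    congr 1
    noncomm_ring
  have main : 4 * (Nat.factorial 4 : ℂ) ^ 2 * (A * P13mc d₁ d₂ * P57mc d₁ d₂).trace
      = F 1 - 2 * F (T13c d₁ d₂) + F (T13c d₁ d₂ * T57c d₁ d₂) := by
    rw [hexp, Matrix.trace_smul, Matrix.trace_add, Matrix.trace_sub, Matrix.trace_sub,
      hsym, hFA 1, hFA (T13c d₁ d₂), hFA (T13c d₁ d₂ * T57c d₁ d₂), h24]
    simp only [smul_eq_mul]
    push_cast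
    ring
  refine ⟨main, ?_⟩
  rw [deltaSq, ← hk, ← hAdef]
  linear_combination Dc d₁ * Dc d₂ * main
end
end

section
/- (Proposition 4, cycle trace formula) Let d and κ be positive integers, let π be a permutation of Fin κ, and let A : Fin κ → Matrix (Fin d) (Fin d) ℂ. Then Tr((⨂ᵢ Aᵢ) · V(π)) equals the product, over the orbits of π on Fin κ, of the traces of the matrix products along each orbit: for an orbit of size m containing a representative l, the corresponding factor is Tr(A l · A (π⁻¹ l) · A (π⁻² l) · ⋯ · A (π^{−(m−1)} l)), and this factor is independent of the choice of representative l. -/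
noncomputable section

open Matrix

/-- The permutation operator `V(π)` on `(ℂ^d)^{⊗κ}`. -/
def permOp (d κ : ℕ) (π : Equiv.Perm (Fin κ)) :
    Matrix (Fin κ → Fin d) (Fin κ → Fin d) ℂ :=
  Matrix.of fun f g => if f = g ∘ ⇑π⁻¹ then 1 else 0

/-- The tensor product `⨂ᵢ Aᵢ` of a family of `d × d` matrices. -/
def tensorProd (d κ : ℕ) (A : Fin κ → Matrix (Fin d) (Fin d) ℂ) :
    Matrix (Fin κ → Fin d) (Fin κ → Fin d) ℂ :=
  Matrix.of fun f g => ∏ i, A i (f i) (g i)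

/-- The factor associated to the orbit (cycle) of `π` through `l`: the trace of the
ordered product `A l · A (π⁻¹ l) · A (π⁻² l) ⋯ A (π^{-(m-1)} l)`, where `m` is the
size of the orbit of `l` (its minimal period under `π`). -/
def orbitFactor (d κ : ℕ) (π : Equiv.Perm (Fin κ))
    (A : Fin κ → Matrix (Fin d) (Fin d) ℂ) (l : Fin κ) : ℂ :=
  (((List.range (Function.minimalPeriod (⇑π) l)).map
      (fun m => A (((π ^ m)⁻¹ : Equiv.Perm (Fin κ)) l))).prod).trace

/-! In the standard basis, `Tr((⨂ᵢ Aᵢ) · V(π)) = ∑_f ∏ᵢ Aᵢ (f i) (f (π⁻¹ i))`. The variables `f i`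
couple only along the cycles of `π⁻¹`, so the sum over `f` factors into one sum per cycle; on the
cycle `l, π⁻¹ l, π⁻² l, …` that sum is the expansion of the trace of the ordered product
`A l · A (π⁻¹ l) ⋯` over closed index paths. -/

namespace Equiv.Perm

open Function

variable {α : Type*}

theorem minimalPeriod_inv (σ : Perm α) (x : α) : minimalPeriod ⇑σ⁻¹ x = minimalPeriod σ x := by
  simpa [MulAction.period_eq_minimalPeriod] using MulAction.period_inv σ x

variable [Finite α]

theorem minimalPeriod_pos (σ : Perm α) (x : α) : 0 < minimalPeriod σ x :=
  MulAction.period_pos_of_orderOf_pos (orderOf_pos σ) x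

def finMinimalPeriodEquivSameCycle (σ : Perm α) (x : α) :
    Fin (minimalPeriod σ x) ≃ {y // σ.SameCycle x y} :=
  Equiv.ofBijective (fun i => ⟨(σ ^ (i : ℕ)) x, ⟨i, by simp⟩⟩) <| by
    refine ⟨fun i j hij => Fin.ext ?_, fun ⟨y, hy⟩ => ?_⟩
    · simp only [Subtype.mk.injEq, coe_pow] at hij
      exact iterate_injOn_Iio_minimalPeriod i.2 j.2 hij
    · obtain ⟨n, rfl⟩ := hy.exists_nat_pow_eq
      refine ⟨⟨n % minimalPeriod σ x, Nat.mod_lt _ (σ.minimalPeriod_pos x)⟩, ?_⟩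
      simp [coe_pow, iterate_mod_minimalPeriod_eq]

theorem finMinimalPeriodEquivSameCycle_finRotate (σ : Perm α) (x : α)
    (i : Fin (minimalPeriod σ x)) :
    finMinimalPeriodEquivSameCycle σ x (finRotate _ i) =
      σ.subtypePerm (fun _ => sameCycle_apply_right) (finMinimalPeriodEquivSameCycle σ x i) := by
  have := i.neZero
  ext
  simp [finMinimalPeriodEquivSameCycle, Fin.val_add, coe_pow, iterate_mod_minimalPeriod_eq,
    iterate_succ_apply']

end Equiv.Perm

namespace Matrix

open Equiv Function

variable {α β m R : Type*} [Fintype α] [DecidableEq α] [Fintype β] [DecidableEq β] [Fintype m]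
  [CommSemiring R]

/-- `permTrace σ B = Tr((⨂ₐ B a) · V(σ⁻¹))`, expanded in the standard basis. -/
def permTrace (σ : Perm α) (B : α → Matrix m m R) : R :=
  ∑ f : α → m, ∏ a, B a (f a) (f (σ a))

theorem permTrace_comp_equiv (e : α ≃ β) {σ : Perm α} {τ : Perm β}
    (h : ∀ a, e (σ a) = τ (e a)) (B : β → Matrix m m R) :
    permTrace σ (fun a => B (e a)) = permTrace τ B :=
  Fintype.sum_equiv (e.arrowCongr (Equiv.refl m)) _ _ fun f =>
    Fintype.prod_equiv e _ _ fun a => by simp [← h]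

theorem permTrace_eq_prod_fiberwise {ι : Type*} [Fintype ι] [DecidableEq ι] (σ : Perm α)
    (S : α → ι) (hS : ∀ a, S (σ a) = S a) (B : α → Matrix m m R) :
    permTrace σ B =
      ∏ j, permTrace (σ.subtypePerm fun a => by rw [hS] : Perm {a // S a = j}) fun a => B a := by
  simp only [permTrace]
  rw [Fintype.prod_sum]
  refine Fintype.sum_equiv
    ((Equiv.arrowCongr (Equiv.sigmaFiberEquiv S).symm (Equiv.refl m)).trans
      (Equiv.piCurry fun _ _ => m)) _ _ fun f => ?_
  rw [← Fintype.prod_fiberwise S]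
  rfl

def cycleTrace (σ : Perm α) (B : α → Matrix m m R) (x : α) : R :=
  permTrace (σ.subtypePerm fun _ => Perm.sameCycle_apply_right : Perm {a // σ.SameCycle x a})
    fun a => B a

theorem _root_.Equiv.Perm.SameCycle.cycleTrace_eq {σ : Perm α} {x y : α} (h : σ.SameCycle x y)
    (B : α → Matrix m m R) : cycleTrace σ B x = cycleTrace σ B y := by
  unfold cycleTrace
  exact permTrace_comp_equiv (Equiv.subtypeEquivRight fun a =>
    (⟨h.symm.trans, h.trans⟩ : σ.SameCycle x a ↔ σ.SameCycle y a)) (fun _ => rfl)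
    fun a : {a // σ.SameCycle y a} => B a

theorem permTrace_eq_prod_cycleTrace (σ : Perm α) (B : α → Matrix m m R) (s : Finset α)
    (hs : ∀ x, ∃! l, l ∈ s ∧ σ.SameCycle l x) :
    permTrace σ B = ∏ l ∈ s, cycleTrace σ B l := by
  choose S hS using hs
  let T (x : α) : s := ⟨S x, (hS x).1.1⟩
  have hT (x : α) (l : s) : T x = l ↔ σ.SameCycle l x :=
    ⟨by rintro rfl; exact (hS x).1.2, fun h => Subtype.ext ((hS x).2 l ⟨l.2, h⟩).symm⟩
  have hTσ (x : α) : T (σ x) = T x := (hT _ _).2 (Perm.sameCycle_apply_right.2 ((hT _ _).1 rfl))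
  rw [permTrace_eq_prod_fiberwise σ T hTσ, ← Finset.prod_coe_sort s]
  refine Fintype.prod_congr _ _ fun l => ?_
  exact permTrace_comp_equiv (Equiv.subtypeEquivRight (hT · l)) (fun _ => rfl)
    fun a : {a // σ.SameCycle l a} => B a

variable [DecidableEq m]

theorem list_prod_ofFn_apply {n : ℕ} (B : Fin (n + 1) → Matrix m m R) (a b : m) :
    (List.ofFn B).prod a b =
      ∑ y : Fin n → m,
        ∏ i, B i (Fin.cons (α := fun _ => m) a y i) (Fin.snoc (α := fun _ => m) y b i) := by
  induction n generalizing a with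
  | zero => simp [Fin.snoc]
  | succ n ih =>
    rw [List.ofFn_succ, List.prod_cons, mul_apply,
      ← (Fin.consEquiv fun _ => m).sum_comp, Fintype.sum_prod_type]
    refine Fintype.sum_congr _ _ fun c => ?_
    rw [ih, Finset.mul_sum]
    refine Fintype.sum_congr _ _ fun y => ?_
    simp [Fin.prod_univ_succ, Fin.consEquiv, ← Fin.cons_snoc_eq_snoc_cons]

theorem trace_list_prod_ofFn {n : ℕ} [NeZero n] (B : Fin n → Matrix m m R) :
    (List.ofFn B).prod.trace = permTrace (finRotate n) B := by
  obtain ⟨n, rfl⟩ := Nat.exists_eq_succ_of_ne_zero (NeZero.ne n)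
  simp only [trace, diag_apply, list_prod_ofFn_apply, Fin.snoc_eq_cons_rotate]
  rw [← Fintype.sum_prod_type', permTrace, ← (Fin.consEquiv fun _ => m).sum_comp]
  rfl

theorem cycleTrace_eq_trace_list_prod (σ : Perm α) (B : α → Matrix m m R) (x : α) :
    cycleTrace σ B x =
      (List.ofFn fun i : Fin (minimalPeriod σ x) => B ((σ ^ (i : ℕ)) x)).prod.trace := by
  have : NeZero (minimalPeriod σ x) := ⟨(σ.minimalPeriod_pos x).ne'⟩
  rw [trace_list_prod_ofFn]
  exact (permTrace_comp_equiv (σ.finMinimalPeriodEquivSameCycle x)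
    (σ.finMinimalPeriodEquivSameCycle_finRotate x) fun a => B a).symm

end Matrix

open Matrix

theorem trace_tensorProd_mul_permOp_eq_permTrace (d κ : ℕ) (π : Equiv.Perm (Fin κ))
    (A : Fin κ → Matrix (Fin d) (Fin d) ℂ) :
    (tensorProd d κ A * permOp d κ π).trace = permTrace π⁻¹ A := by
  refine Fintype.sum_congr _ _ fun f => ?_
  simp only [diag_apply, mul_apply, tensorProd, permOp, of_apply, mul_ite, mul_one, mul_zero,
    Finset.sum_ite_eq', Finset.mem_univ, if_true]
  rfl

theorem orbitFactor_eq_cycleTrace (d κ : ℕ) (π : Equiv.Perm (Fin κ))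
    (A : Fin κ → Matrix (Fin d) (Fin d) ℂ) (l : Fin κ) :
    orbitFactor d κ π A l = cycleTrace π⁻¹ A l := by
  rw [cycleTrace_eq_trace_list_prod, orbitFactor, ← π.minimalPeriod_inv,
    ← List.map_coe_finRange_eq_range, List.map_map, ← List.ofFn_eq_map]
  simp only [Function.comp_def, inv_pow]

theorem trace_tensorProd_mul_permOp_general (d κ : ℕ)
    (π : Equiv.Perm (Fin κ)) (A : Fin κ → Matrix (Fin d) (Fin d) ℂ) :
    (∀ l : Fin κ, orbitFactor d κ π A (π l) = orbitFactor d κ π A l) ∧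
    ∀ R : Finset (Fin κ),
      (∀ x : Fin κ, ∃! l : Fin κ, l ∈ R ∧ π.SameCycle l x) →
      (tensorProd d κ A * permOp d κ π).trace = ∏ l ∈ R, orbitFactor d κ π A l := by
  simp only [orbitFactor_eq_cycleTrace]
  refine ⟨fun l => Equiv.Perm.SameCycle.cycleTrace_eq ⟨1, by simp⟩ A, fun R hR => ?_⟩
  rw [trace_tensorProd_mul_permOp_eq_permTrace]
  exact permTrace_eq_prod_cycleTrace π⁻¹ A R (by simpa only [Equiv.Perm.sameCycle_inv] using hR)

/-- (Proposition 4, cycle trace formula) `Tr((⨂ᵢ Aᵢ) · V(π))` is the product, over the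
orbits of `π` on `Fin κ`, of the traces of the matrix products along each orbit; each
such factor is independent of the choice of orbit representative. -/
theorem trace_tensorProd_mul_permOp (d κ : ℕ) (hd : 0 < d) (hκ : 0 < κ)
    (π : Equiv.Perm (Fin κ)) (A : Fin κ → Matrix (Fin d) (Fin d) ℂ) :
    (∀ l : Fin κ, orbitFactor d κ π A (π l) = orbitFactor d κ π A l) ∧
    ∀ R : Finset (Fin κ),
      (∀ x : Fin κ, ∃! l : Fin κ, l ∈ R ∧ π.SameCycle l x) →
      (tensorProd d κ A * permOp d κ π).trace = ∏ l ∈ R, orbitFactor d κ π A l :=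
  trace_tensorProd_mul_permOp_general d κ π A

end
end

section
/- (Controlled-unitary family) Let u be any 2×2 unitary matrix over ℂ, and let U_CU be the matrix indexed by Fin 2 × Fin 2 with entries U_CU (a,b) (a',b') = (if a = 0 then (if b = b' then 1 else 0) else u b b') when a = a', and 0 when a ≠ a' (i.e. U_CU = |0⟩⟨0| ⊗ I₂ + |1⟩⟨1| ⊗ u). Then e(U_CU) = (2/9)·(1 − |Tr u|²/4) and Δ²(U_CU) = (11/25)·e(U_CU)²; in particular the ratio Δ(U_CU)/e(U_CU) equals √11/5 whenever e(U_CU) ≠ 0. For u = diag(1, e^{iθ}) this gives e = (2/9)·sin²(θ/2) and Δ² = (44/2025)·sin⁴(θ/2). -/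
noncomputable section

open Matrix
open scoped Kronecker

/-- The controlled-unitary gate `|0⟩⟨0| ⊗ I₂ + |1⟩⟨1| ⊗ u`. -/
def CUgate (u : Matrix (Fin 2) (Fin 2) ℂ) : Matrix (Fin 2 × Fin 2) (Fin 2 × Fin 2) ℂ :=
  Matrix.of fun x y =>
    if x.1 = y.1 then (if x.1 = 0 then (if x.2 = y.2 then 1 else 0) else u x.2 y.2)
    else 0

open Equiv Finset
open scoped ComplexConjugate

/-!
`CUgate u` is block diagonal in the control qubit, with blocks `u ^ 0 = 1` and `u ^ 1 = u`, and
every projector entering `e` and `Δ²` is a product of a control part and a target part. Hence the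
four-copy trace against a permutation `s` of the controls collapses to a sum over control strings
`c` of a permutation count times a symmetrized trace, over the four target copies, of the
matrices `((u ^ c (s⁻¹ i))ᴴ * u ^ c i)ᵀ`; these are `1`, `P = uᴴᵀ` or `Q = uᵀ = P⁻¹`. Expanding the
symmetrized trace over the cycles of `S₄` leaves only `Tr P`, `Tr Q`, `Tr P²`, `Tr Q²`, and for a
`2 × 2` matrix and its inverse Cayley–Hamilton gives
`(Tr P² + (Tr P)²)(Tr Q² + (Tr Q)²) = 4 (Tr P Tr Q - 1)²`. The four-copy trace is therefore
`(4 - |Tr u|²)² / 36`, while the two-copy trace `1 - |Tr u|² / 4` is a direct computation.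
-/

namespace Matrix

variable {n R : Type*} [DecidableEq n]

lemma permMatrix_apply [Zero R] [One R] (σ : Perm n) (i j : n) :
    σ.permMatrix R i j = if σ i = j then 1 else 0 := by
  simp [PEquiv.toMatrix_apply, eq_comm]

variable [Fintype n] [CommSemiring R] [StarRing R]

lemma trace_mul_mul_conjTranspose_mul_permMatrix (W A : Matrix n n R) (σ : Perm n) :
    (W * A * Wᴴ * σ.permMatrix R).trace =
      ∑ f, ∑ g, ∑ h, W f g * A g h * conj (W (σ.symm f) h) := by
  simp only [Perm.permMatrix, PEquiv.mul_toMatrix_toPEquiv, trace, diag_apply, submatrix_apply,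
    id, mul_apply, conjTranspose_apply, starRingEnd_apply, Finset.sum_mul]
  exact Finset.sum_congr rfl fun f _ => Finset.sum_comm

lemma trace_mul_permMatrix_mul_conjTranspose_mul_permMatrix (W : Matrix n n R) (σ τ : Perm n) :
    (W * σ.permMatrix R * Wᴴ * τ.permMatrix R).trace =
      ∑ x, ∑ y, W x (σ.symm y) * conj (W (τ.symm x) y) := by
  simp only [Perm.permMatrix, PEquiv.mul_toMatrix_toPEquiv, trace, diag_apply, submatrix_apply,
    id, mul_apply, conjTranspose_apply, starRingEnd_apply]

end Matrix

lemma Fintype.sum_pi_prod {ι α β M : Type*} [Fintype ι] [DecidableEq ι] [Fintype α] [Fintype β]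
    [AddCommMonoid M] (F : (ι → α × β) → M) :
    ∑ f, F f = ∑ c : ι → α, ∑ x : ι → β, F fun i => (c i, x i) := by
  rw [← ((arrowProdEquivProdArrow ι (fun _ => α) (fun _ => β)).symm.sum_comp F),
    Fintype.sum_prod_type]
  rfl

lemma Fintype.sum_fin_four_fun {α M : Type*} [Fintype α] [AddCommMonoid M]
    (F : (Fin 4 → α) → M) :
    ∑ v, F v = ∑ a, ∑ b, ∑ c, ∑ d, F ![a, b, c, d] := by
  simp only [← (Fin.consEquiv fun _ => α).sum_comp, Fintype.sum_prod_type, Fintype.sum_unique]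
  congr!

def permCount {ι α : Type*} [Fintype ι] [DecidableEq ι] [DecidableEq α] (v w : ι → α) : ℕ :=
  #{σ : Perm ι | w = v ∘ σ}

lemma Equiv.Perm.forall_eq_apply_inv_iff {ι α : Type*} (σ : Perm ι) (v w : ι → α) :
    (∀ i, v i = w (σ⁻¹ i)) ↔ ∀ j, w j = v (σ j) :=
  ⟨fun h j => by simpa using (h (σ j)).symm, fun h i => by simp [h]⟩

lemma sum_perm_ite_eq_permCount {ι α R : Type*} [Fintype ι] [DecidableEq ι] [DecidableEq α]
    [AddCommMonoidWithOne R] (v w : ι → α) :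
    ∑ σ : Perm ι, (if w = v ∘ σ then 1 else 0 : R) = permCount v w := by
  rw [Finset.sum_boole, permCount]

lemma permCount_fin_four_two : ∀ a b c d a' b' c' d' : Fin 2,
    permCount ![a, b, c, d] ![a', b', c', d'] =
      if (a + b + c + d : ℕ) = a' + b' + c' + d' then
        (a + b + c + d : ℕ).factorial * (4 - (a + b + c + d : ℕ)).factorial else 0 := by
  decide

section TwoCopies

variable {d₁ d₂ : ℕ}

def swap13 : Perm ((Fin d₁ × Fin d₂) × (Fin d₁ × Fin d₂)) where
  toFun x := ((x.2.1, x.1.2), (x.1.1, x.2.2))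
  invFun x := ((x.2.1, x.1.2), (x.1.1, x.2.2))
  left_inv _ := rfl
  right_inv _ := rfl

def swap24 : Perm ((Fin d₁ × Fin d₂) × (Fin d₁ × Fin d₂)) where
  toFun x := ((x.1.1, x.2.2), (x.2.1, x.1.2))
  invFun x := ((x.1.1, x.2.2), (x.2.1, x.1.2))
  left_inv _ := rfl
  right_inv _ := rfl

lemma T13_eq_permMatrix : T13 d₁ d₂ = swap13.permMatrix ℂ := by
  ext x y
  simp only [T13, of_apply, permMatrix_apply, swap13, coe_fn_mk, Prod.ext_iff]
  congr 1
  simp only [eq_iff_iff]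
  tauto

lemma T24_eq_permMatrix : T24 d₁ d₂ = swap24.permMatrix ℂ := by
  ext x y
  simp only [T24, of_apply, permMatrix_apply, swap24, coe_fn_mk, Prod.ext_iff]
  congr 1
  simp only [eq_iff_iff]
  tauto

end TwoCopies

section FourCopies

variable {d₁ d₂ : ℕ}

def permFst (σ : Perm (Fin 4)) : Perm (Fin 4 → Fin d₁ × Fin d₂) where
  toFun f i := ((f (σ i)).1, (f i).2)
  invFun f i := ((f (σ⁻¹ i)).1, (f i).2)
  left_inv f := by ext i <;> simp
  right_inv f := by ext i <;> simp

lemma permFst_mul (σ τ : Perm (Fin 4)) :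
    (permFst σ * permFst τ : Perm (Fin 4 → Fin d₁ × Fin d₂)) = permFst (τ * σ) := by
  ext f i <;> simp [permFst]

lemma permFst_one : (permFst 1 : Perm (Fin 4 → Fin d₁ × Fin d₂)) = 1 := by
  ext f i <;> simp [permFst]

lemma Vodd_eq_permMatrix (σ : Perm (Fin 4)) : Vodd d₁ d₂ σ = (permFst σ).permMatrix ℂ := by
  ext f g
  rw [Vodd, of_apply, permMatrix_apply]
  congr 1
  rw [funext_iff, eq_iff_iff]
  refine ⟨fun ⟨h₁, h₂⟩ j => Prod.ext ?_ (h₂ j), fun h => ⟨fun i => ?_, fun i => ?_⟩⟩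
  · simpa [permFst] using (h₁ (σ j))
  · simpa [permFst] using congrArg Prod.fst (h (σ⁻¹ i))
  · simpa [permFst] using congrArg Prod.snd (h i)

lemma P13mc_mul_P57mc : P13mc d₁ d₂ * P57mc d₁ d₂ = (4 : ℂ)⁻¹ •
    ((permFst 1).permMatrix ℂ - (permFst (swap 0 1)).permMatrix ℂ
      - (permFst (swap 2 3)).permMatrix ℂ + (permFst (swap 0 1 * swap 2 3)).permMatrix ℂ) := by
  rw [P13mc, P57mc, T13c, T57c, Vodd_eq_permMatrix, Vodd_eq_permMatrix, permFst_one,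
    permMatrix_one, ← permFst_mul, permMatrix_mul, smul_mul_smul_comm, sub_mul, mul_sub,
    mul_sub, Matrix.one_mul, Matrix.mul_one, Matrix.one_mul]
  module

lemma P1357_apply (f g : Fin 4 → Fin d₁ × Fin d₂) :
    P1357 d₁ d₂ f g = (permCount (Prod.fst ∘ f) (Prod.fst ∘ g) / 24 : ℂ) *
      if Prod.snd ∘ f = Prod.snd ∘ g then 1 else 0 := by
  have hV (σ : Perm (Fin 4)) : Vodd d₁ d₂ σ f g =
      (if Prod.fst ∘ g = (Prod.fst ∘ f) ∘ σ then 1 else 0) *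
        if Prod.snd ∘ f = Prod.snd ∘ g then 1 else 0 := by
    simp only [Vodd, of_apply, funext_iff, Function.comp_apply, ite_zero_mul_ite_zero, mul_one,
      σ.forall_eq_apply_inv_iff (fun i => (f i).1) (fun i => (g i).1)]
  simp only [P1357, Matrix.smul_apply, Matrix.sum_apply, hV, ← Finset.sum_mul,
    sum_perm_ite_eq_permCount, smul_eq_mul, Nat.factorial]
  ring

lemma P2468_apply (f g : Fin 4 → Fin d₁ × Fin d₂) :
    P2468 d₁ d₂ f g = (permCount (Prod.snd ∘ f) (Prod.snd ∘ g) / 24 : ℂ) *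
      if Prod.fst ∘ f = Prod.fst ∘ g then 1 else 0 := by
  have hV (σ : Perm (Fin 4)) : Veven d₁ d₂ σ f g =
      (if Prod.snd ∘ g = (Prod.snd ∘ f) ∘ σ then 1 else 0) *
        if Prod.fst ∘ f = Prod.fst ∘ g then 1 else 0 := by
    simp only [Veven, of_apply, funext_iff, Function.comp_apply, ite_zero_mul_ite_zero, mul_one,
      σ.forall_eq_apply_inv_iff (fun i => (f i).2) (fun i => (g i).2)]
  simp only [P2468, Matrix.smul_apply, Matrix.sum_apply, hV, ← Finset.sum_mul,
    sum_perm_ite_eq_permCount, smul_eq_mul, Nat.factorial]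
  ring

lemma P1357_mul_P2468_apply (f g : Fin 4 → Fin d₁ × Fin d₂) :
    (P1357 d₁ d₂ * P2468 d₁ d₂) f g =
      permCount (Prod.fst ∘ f) (Prod.fst ∘ g) * permCount (Prod.snd ∘ f) (Prod.snd ∘ g) / 576 := by
  rw [mul_apply, Fintype.sum_pi_prod]
  simp only [P1357_apply, P2468_apply, Function.comp_def, mul_ite, ite_mul, mul_zero, zero_mul,
    mul_one]
  rw [Finset.sum_comm]
  simp only [Finset.sum_ite_eq, Finset.sum_ite_eq', Finset.mem_univ, if_true]
  ring

/-- `symTrace P = 4! · Tr((P₀ ⊗ P₁ ⊗ P₂ ⊗ P₃) · P_sym)`, with `P_sym` the symmetrizer. -/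
def symTrace {d : ℕ} (P : Fin 4 → Matrix (Fin d) (Fin d) ℂ) : ℂ :=
  ∑ y : Fin 4 → Fin d, ∑ z : Fin 4 → Fin d, (permCount y z : ℂ) * ∏ i, P i (y i) (z i)

def gramSum (G : Fin d₁ → Fin d₁ → Matrix (Fin d₂) (Fin d₂) ℂ) (s : Perm (Fin 4)) : ℂ :=
  (576 : ℂ)⁻¹ * ∑ c : Fin 4 → Fin d₁,
    (permCount c (c ∘ ⇑s⁻¹) : ℂ) * symTrace fun i => G (c i) ((c ∘ ⇑s⁻¹) i)

section Controlled

variable (U : Matrix (Fin d₁ × Fin d₂) (Fin d₁ × Fin d₂) ℂ)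
  (V : Fin d₁ → Matrix (Fin d₂) (Fin d₂) ℂ)
  (hU : ∀ x y, U x y = if x.1 = y.1 then V x.1 x.2 y.2 else 0)
include hU

lemma kpow4_apply_of_controlled (c c' : Fin 4 → Fin d₁) (x y : Fin 4 → Fin d₂) :
    kpow4 d₁ d₂ U (fun i => (c i, x i)) (fun i => (c' i, y i)) =
      if c = c' then ∏ i, V (c i) (x i) (y i) else 0 := by
  simp only [kpow4, of_apply, hU]
  split_ifs with h
  · subst h; simp
  · obtain ⟨i, hi⟩ := Function.ne_iff.mp h
    exact Finset.prod_eq_zero (Finset.mem_univ i) (if_neg hi)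

omit hU in
lemma prod_gram_apply (c c' : Fin 4 → Fin d₁) (y z : Fin 4 → Fin d₂) :
    ∏ i, ((V (c' i))ᴴ * V (c i))ᵀ (y i) (z i) =
      ∑ x : Fin 4 → Fin d₂, (∏ i, V (c i) (x i) (y i)) * conj (∏ i, V (c' i) (x i) (z i)) := by
  simp only [transpose_apply, mul_apply, conjTranspose_apply, RCLike.star_def, Fintype.prod_sum,
    map_prod, ← Finset.prod_mul_distrib, mul_comm]

lemma trace_kpow4_mul_sym_mul_permFst (s : Perm (Fin 4)) :
    (kpow4 d₁ d₂ U * (P1357 d₁ d₂ * P2468 d₁ d₂) * (kpow4 d₁ d₂ U)ᴴ *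
      (permFst s).permMatrix ℂ).trace = gramSum (fun a b => ((V b)ᴴ * V a)ᵀ) s := by
  have hsymm (c : Fin 4 → Fin d₁) (x : Fin 4 → Fin d₂) :
      (permFst s).symm (fun i => (c i, x i)) = fun i => (c (s⁻¹ i), x i) := rfl
  rw [trace_mul_mul_conjTranspose_mul_permMatrix, Fintype.sum_pi_prod, gramSum, Finset.mul_sum]
  refine Finset.sum_congr rfl fun c _ => ?_
  have hfst (c : Fin 4 → Fin d₁) (x : Fin 4 → Fin d₂) : (Prod.fst ∘ fun i => (c i, x i)) = c := rfl
  have hsnd (c : Fin 4 → Fin d₁) (x : Fin 4 → Fin d₂) : (Prod.snd ∘ fun i => (c i, x i)) = x := rfl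
  simp only [Fintype.sum_pi_prod (ι := Fin 4) (α := Fin d₁) (β := Fin d₂), hsymm,
    kpow4_apply_of_controlled U V hU, P1357_mul_P2468_apply, hfst, hsnd]
  simp only [apply_ite (starRingEnd ℂ), map_zero, ite_mul, mul_ite, zero_mul, mul_zero,
    Finset.sum_ite_irrel, Finset.sum_const_zero, Finset.sum_ite_eq, Finset.mem_univ, if_true]
  eta_reduce
  simp only [symTrace, prod_gram_apply, Finset.mul_sum, Function.comp_def]
  rw [Finset.sum_comm]
  refine Finset.sum_congr rfl fun y _ => ?_
  rw [Finset.sum_comm]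
  refine Finset.sum_congr rfl fun z _ => Finset.sum_congr rfl fun x _ => ?_
  ring

end Controlled

end FourCopies

/-- One term for each `σ ∈ S₄`: the product over the cycles `(i σi σ²i …)` of `σ` of
`Tr (P i * P (σ i) * P (σ² i) * …)`. -/
lemma symTrace_fin_two (P : Fin 4 → Matrix (Fin 2) (Fin 2) ℂ) : symTrace P =
    let T : Matrix (Fin 2) (Fin 2) ℂ → ℂ := trace
    T (P 0) * T (P 1) * T (P 2) * T (P 3)
    + T (P 0 * P 1) * T (P 2) * T (P 3) + T (P 0 * P 2) * T (P 1) * T (P 3)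
    + T (P 0 * P 3) * T (P 1) * T (P 2) + T (P 1 * P 2) * T (P 0) * T (P 3)
    + T (P 1 * P 3) * T (P 0) * T (P 2) + T (P 2 * P 3) * T (P 0) * T (P 1)
    + (T (P 0 * P 1 * P 2) + T (P 0 * P 2 * P 1)) * T (P 3)
    + (T (P 0 * P 1 * P 3) + T (P 0 * P 3 * P 1)) * T (P 2)
    + (T (P 0 * P 2 * P 3) + T (P 0 * P 3 * P 2)) * T (P 1)
    + (T (P 1 * P 2 * P 3) + T (P 1 * P 3 * P 2)) * T (P 0)
    + T (P 0 * P 1) * T (P 2 * P 3) + T (P 0 * P 2) * T (P 1 * P 3)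
    + T (P 0 * P 3) * T (P 1 * P 2)
    + T (P 0 * P 1 * P 2 * P 3) + T (P 0 * P 1 * P 3 * P 2) + T (P 0 * P 2 * P 1 * P 3)
    + T (P 0 * P 2 * P 3 * P 1) + T (P 0 * P 3 * P 1 * P 2) + T (P 0 * P 3 * P 2 * P 1) := by
  simp only [symTrace, Fintype.sum_fin_four_fun, Fin.sum_univ_two, Fin.prod_univ_four,
    Matrix.cons_val_zero, Matrix.cons_val_one, Matrix.cons_val_two, Matrix.cons_val_three,
    Matrix.head_cons, Matrix.tail_cons, permCount_fin_four_two, Fin.val_zero, Fin.val_one]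
  simp only [trace_fin_two, mul_apply, Fin.sum_univ_two]
  norm_num [Nat.factorial]
  ring

namespace Matrix

variable {R : Type*} [CommRing R]

lemma trace_mul_self_fin_two (A : Matrix (Fin 2) (Fin 2) R) :
    (A * A).trace = A.trace ^ 2 - 2 * A.det := by
  simp only [trace_fin_two, det_fin_two, mul_apply, Fin.sum_univ_two]
  ring

variable {P Q : Matrix (Fin 2) (Fin 2) R} (hPQ : P * Q = 1)
include hPQ

lemma det_mul_trace_of_mul_eq_one_fin_two : P.det * Q.trace = P.trace := by
  have hadj : adjugate P = P.det • Q := by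
    rw [← Matrix.mul_one (adjugate P), ← hPQ, ← Matrix.mul_assoc, adjugate_mul, smul_mul_assoc,
      Matrix.one_mul]
  rw [← smul_eq_mul, ← trace_smul, ← hadj, adjugate_fin_two, trace_fin_two, trace_fin_two]
  simp only [of_apply, cons_val', cons_val_zero, cons_val_one, empty_val', cons_val_fin_one]
  ring

lemma trace_mul_self_add_sq_mul_of_mul_eq_one_fin_two :
    ((P * P).trace + P.trace ^ 2) * ((Q * Q).trace + Q.trace ^ 2) =
      4 * (P.trace * Q.trace - 1) ^ 2 := by
  have hdet : P.det * Q.det = 1 := by rw [← det_mul, hPQ, det_one]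
  rw [trace_mul_self_fin_two, trace_mul_self_fin_two, ← det_mul_trace_of_mul_eq_one_fin_two hPQ]
  linear_combination (-4 * (P.det * Q.trace ^ 2 - 1)) * hdet

end Matrix

section InversePair

variable {P Q : Matrix (Fin 2) (Fin 2) ℂ} (hPQ : P * Q = 1)
include hPQ

omit hPQ in
lemma gramSum_one : gramSum ![![1, P], ![Q, 1]] 1 = 25 := by
  simp only [gramSum, inv_one, Perm.coe_one, Function.comp_id, Fintype.sum_fin_four_fun,
    Fin.sum_univ_two, permCount_fin_four_two, Matrix.cons_val_zero, Matrix.cons_val_one,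
    Matrix.cons_val_two, Matrix.cons_val_three, Matrix.head_cons, Matrix.tail_cons, Fin.val_zero,
    Fin.val_one, symTrace_fin_two, Matrix.mul_one, trace_one, Fintype.card_fin]
  norm_num [Nat.factorial]

lemma gramSum_swap01 :
    gramSum ![![1, P], ![Q, 1]] (swap 0 1) = 175 / 9 + 25 / 18 * (P.trace * Q.trace) := by
  have hQP : Q * P = 1 := mul_eq_one_comm.mp hPQ
  have hc (a b c d : Fin 2) : ![a, b, c, d] ∘ ⇑(swap (0 : Fin 4) 1)⁻¹ = ![b, a, c, d] := by
    ext i; fin_cases i <;> rfl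
  simp only [gramSum, hc, Fintype.sum_fin_four_fun,
    Fin.sum_univ_two, permCount_fin_four_two, Matrix.cons_val_zero, Matrix.cons_val_one,
    Matrix.cons_val_two, Matrix.cons_val_three, Matrix.head_cons, Matrix.tail_cons, Fin.val_zero,
    Fin.val_one, symTrace_fin_two, Matrix.mul_one, hPQ, hQP, trace_one,
    Fintype.card_fin]
  norm_num [Nat.factorial]
  ring

lemma gramSum_swap23 :
    gramSum ![![1, P], ![Q, 1]] (swap 2 3) = 175 / 9 + 25 / 18 * (P.trace * Q.trace) := by
  have hQP : Q * P = 1 := mul_eq_one_comm.mp hPQ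
  have hc (a b c d : Fin 2) : ![a, b, c, d] ∘ ⇑(swap (2 : Fin 4) 3)⁻¹ = ![a, b, d, c] := by
    ext i; fin_cases i <;> rfl
  simp only [gramSum, hc, Fintype.sum_fin_four_fun,
    Fin.sum_univ_two, permCount_fin_four_two, Matrix.cons_val_zero, Matrix.cons_val_one,
    Matrix.cons_val_two, Matrix.cons_val_three, Matrix.head_cons, Matrix.tail_cons, Fin.val_zero,
    Fin.val_one, symTrace_fin_two, Matrix.mul_one, Matrix.one_mul, hPQ, hQP, trace_one,
    Fintype.card_fin]
  norm_num [Nat.factorial]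
  ring

lemma gramSum_swap01_swap23 :
    gramSum ![![1, P], ![Q, 1]] (swap 0 1 * swap 2 3) =
      141 / 9 + 17 / 9 * (P.trace * Q.trace) + (P.trace * Q.trace) ^ 2 / 9 := by
  have hQP : Q * P = 1 := mul_eq_one_comm.mp hPQ
  have hPQ' (X : Matrix (Fin 2) (Fin 2) ℂ) : X * P * Q = X := by
    rw [Matrix.mul_assoc, hPQ, Matrix.mul_one]
  have hQP' (X : Matrix (Fin 2) (Fin 2) ℂ) : X * Q * P = X := by
    rw [Matrix.mul_assoc, hQP, Matrix.mul_one]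
  have hc (a b c d : Fin 2) :
      ![a, b, c, d] ∘ ⇑(swap 0 1 * swap 2 3 : Perm (Fin 4))⁻¹ = ![b, a, d, c] := by
    ext i; fin_cases i <;> rfl
  simp only [gramSum, hc, Fintype.sum_fin_four_fun,
    Fin.sum_univ_two, permCount_fin_four_two, Matrix.cons_val_zero, Matrix.cons_val_one,
    Matrix.cons_val_two, Matrix.cons_val_three, Matrix.head_cons, Matrix.tail_cons, Fin.val_zero,
    Fin.val_one, symTrace_fin_two, Matrix.mul_one, Matrix.one_mul, hPQ, hQP, hPQ', hQP', trace_one,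
    Fintype.card_fin]
  norm_num [Nat.factorial]
  linear_combination (1 / 36 : ℂ) * trace_mul_self_add_sq_mul_of_mul_eq_one_fin_two hPQ

lemma gramSum_alternating :
    (gramSum ![![1, P], ![Q, 1]] 1 - gramSum ![![1, P], ![Q, 1]] (swap 0 1)
      - gramSum ![![1, P], ![Q, 1]] (swap 2 3)
      + gramSum ![![1, P], ![Q, 1]] (swap 0 1 * swap 2 3)) / 4 =
      (4 - P.trace * Q.trace) ^ 2 / 36 := by
  rw [gramSum_one, gramSum_swap01 hPQ, gramSum_swap23 hPQ, gramSum_swap01_swap23 hPQ]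
  ring

end InversePair

lemma Real.sqrt_mul_sq_div_self {c E : ℝ} (hE : 0 < E) : √(c * E ^ 2) / E = √c := by
  rw [Real.sqrt_mul' _ (sq_nonneg E), Real.sqrt_sq hE.le, mul_div_cancel_right₀ _ hE.ne']

section ControlledU

variable (u : Matrix (Fin 2) (Fin 2) ℂ)

lemma CUgate_apply (x y : Fin 2 × Fin 2) :
    CUgate u x y = if x.1 = y.1 then (u ^ (x.1 : ℕ)) x.2 y.2 else 0 := by
  rcases x with ⟨a, x⟩
  fin_cases a <;> simp [CUgate, one_apply]

variable {u}

lemma gram_pow_eq_of_unitary (hu : uᴴ * u = 1) :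
    (fun a b : Fin 2 => ((u ^ (b : ℕ))ᴴ * u ^ (a : ℕ))ᵀ) = ![![1, uᴴᵀ], ![uᵀ, 1]] := by
  ext a b : 2
  fin_cases a <;> fin_cases b <;> simp [hu]

set_option maxHeartbeats 1000000 in
lemma trace_sym2_CUgate (hu : uᴴ * u = 1) :
    ((CUgate u ⊗ₖ CUgate u) * P13p 2 2 * P24p 2 2 * (CUgate u ⊗ₖ CUgate u)ᴴ * P13m 2 2).trace =
      1 - Complex.normSq u.trace / 4 := by
  have hcol (j : Fin 2) : conj (u 0 j) * u 0 j + conj (u 1 j) * u 1 j = 1 := by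
    simpa [mul_apply, Fin.sum_univ_two] using congrFun (congrFun hu j) j
  rw [P13p, P24p, P13m, T13_eq_permMatrix, T24_eq_permMatrix, ← permMatrix_refl]
  simp only [Matrix.smul_mul, Matrix.mul_smul, Matrix.add_mul, Matrix.mul_add, Matrix.mul_sub,
    Matrix.mul_assoc, ← permMatrix_mul]
  simp only [← Matrix.mul_assoc, trace_add, trace_sub, trace_smul,
    trace_mul_permMatrix_mul_conjTranspose_mul_permMatrix]
  simp only [Fintype.sum_prod_type, Fin.sum_univ_two, swap13, swap24, Perm.mul_def, refl_symm,
    refl_apply, symm_trans_apply, coe_fn_symm_mk, kroneckerMap_apply, CUgate, of_apply]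
  rw [← Complex.mul_conj, trace_fin_two]
  norm_num
  linear_combination (1 / 2 : ℂ) * hcol 0 + (1 / 2 : ℂ) * hcol 1

lemma trace_sym4_CUgate (hu : uᴴ * u = 1) :
    (kpow4 2 2 (CUgate u) * P1357 2 2 * P2468 2 2 * (kpow4 2 2 (CUgate u))ᴴ * P13mc 2 2 *
      P57mc 2 2).trace = (4 - Complex.normSq u.trace) ^ 2 / 36 := by
  have hPQ : uᴴᵀ * uᵀ = 1 := by rw [← transpose_mul, mul_eq_one_comm.mp hu, transpose_one]
  rw [Matrix.mul_assoc _ (P13mc 2 2), Matrix.mul_assoc (kpow4 2 2 (CUgate u)), P13mc_mul_P57mc]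
  simp only [Matrix.mul_smul, Matrix.mul_add, Matrix.mul_sub, trace_smul, trace_add, trace_sub,
    trace_kpow4_mul_sym_mul_permFst (CUgate u) (fun a => u ^ (a : ℕ)) (CUgate_apply u),
    gram_pow_eq_of_unitary hu, smul_eq_mul]
  have h := gramSum_alternating hPQ
  rw [trace_transpose, trace_transpose, trace_conjTranspose, Complex.star_def] at h
  rw [← Complex.mul_conj]
  linear_combination h

lemma ePow_CUgate (hu : uᴴ * u = 1) :
    ePow 2 2 (CUgate u) = 2 / 9 * (1 - Complex.normSq u.trace / 4) := by
  rw [ePow, trace_sym2_CUgate hu]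
  norm_num

lemma deltaSq_CUgate (hu : uᴴ * u = 1) :
    deltaSq 2 2 (CUgate u) = 11 / 25 * ePow 2 2 (CUgate u) ^ 2 := by
  rw [deltaSq, trace_sym4_CUgate hu, ePow_CUgate hu, Dc]
  norm_num [Nat.factorial]
  ring

lemma normSq_trace_le_four_of_unitary (hu : uᴴ * u = 1) : Complex.normSq u.trace ≤ 4 := by
  have hmem : u ∈ unitaryGroup (Fin 2) ℂ := mem_unitaryGroup_iff'.mpr hu
  have htr : ‖u.trace‖ ≤ 2 := by
    rw [trace_fin_two]
    linarith [norm_add_le (u 0 0) (u 1 1), entry_norm_bound_of_unitary hmem 0 0,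
      entry_norm_bound_of_unitary hmem 1 1]
  rw [Complex.normSq_eq_norm_sq]
  nlinarith [norm_nonneg u.trace]

lemma deltaSq_div_ePow_CUgate (hu : uᴴ * u = 1) (hne : ePow 2 2 (CUgate u) ≠ 0) :
    √(deltaSq 2 2 (CUgate u)).re / (ePow 2 2 (CUgate u)).re = √11 / 5 := by
  have hE : ePow 2 2 (CUgate u) = ((2 / 9 * (1 - Complex.normSq u.trace / 4) : ℝ) : ℂ) := by
    rw [ePow_CUgate hu]; push_cast; ring
  have hE₀ : 0 ≤ 2 / 9 * (1 - Complex.normSq u.trace / 4) := by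
    linarith [normSq_trace_le_four_of_unitary hu]
  generalize 2 / 9 * (1 - Complex.normSq u.trace / 4) = E at hE hE₀
  have hEpos : 0 < E := lt_of_le_of_ne hE₀ fun h => hne (by rw [hE, ← h, Complex.ofReal_zero])
  have hΔ : deltaSq 2 2 (CUgate u) = ((11 / 25 * E ^ 2 : ℝ) : ℂ) := by
    rw [deltaSq_CUgate hu, hE]; push_cast; ring
  rw [hΔ, hE, Complex.ofReal_re, Complex.ofReal_re, Real.sqrt_mul_sq_div_self hEpos,
    Real.sqrt_div' _ (by norm_num : (0 : ℝ) ≤ 25), show (25 : ℝ) = 5 ^ 2 by norm_num,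
    Real.sqrt_sq (by norm_num : (0 : ℝ) ≤ 5)]

end ControlledU

lemma conjTranspose_mul_self_diag_exp (θ : ℝ) :
    (!![1, 0; 0, Complex.exp (θ * Complex.I)])ᴴ * !![1, 0; 0, Complex.exp (θ * Complex.I)] = 1 := by
  have h : conj (Complex.exp (θ * Complex.I)) * Complex.exp (θ * Complex.I) = 1 := by
    rw [← Complex.exp_conj, map_mul, Complex.conj_ofReal, Complex.conj_I, ← Complex.exp_add]
    simp
  ext i j
  fin_cases i <;> fin_cases j <;> simp [mul_apply, h]

lemma one_sub_normSq_trace_diag_exp_div_four (θ : ℝ) :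
    1 - Complex.normSq (!![1, 0; 0, Complex.exp (θ * Complex.I)]).trace / 4 =
      Real.sin (θ / 2) ^ 2 := by
  have htr : (!![1, 0; 0, Complex.exp (θ * Complex.I)]).trace =
      ((1 + Real.cos θ : ℝ) : ℂ) + Real.sin θ * Complex.I := by
    rw [trace_fin_two_of, Complex.exp_mul_I, ← Complex.ofReal_cos, ← Complex.ofReal_sin]
    push_cast
    ring
  have hcos := Real.cos_sq (θ / 2)
  rw [show 2 * (θ / 2) = θ by ring] at hcos
  rw [htr, Complex.normSq_add_mul_I]
  nlinarith [Real.sin_sq_add_cos_sq θ, Real.sin_sq_add_cos_sq (θ / 2)]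

/-- (Controlled-unitary family) For a `2×2` unitary `u`:
`e(CU) = (2/9)(1 − |Tr u|²/4)`, `Δ²(CU) = (11/25)·e(CU)²`; in particular the ratio
`Δ/e` equals `√11/5` whenever `e ≠ 0`; and for `u = diag(1, e^{iθ})` this gives
`e = (2/9)sin²(θ/2)` and `Δ² = (44/2025)sin⁴(θ/2)`. -/
theorem ePow_deltaSq_CU (u : Matrix (Fin 2) (Fin 2) ℂ) (hu : uᴴ * u = 1) :
    ePow 2 2 (CUgate u) = (2 / 9) * (1 - ((Complex.normSq u.trace : ℝ) : ℂ) / 4) ∧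
    deltaSq 2 2 (CUgate u) = (11 / 25) * (ePow 2 2 (CUgate u)) ^ 2 ∧
    (ePow 2 2 (CUgate u) ≠ 0 →
      Real.sqrt (deltaSq 2 2 (CUgate u)).re / (ePow 2 2 (CUgate u)).re =
        Real.sqrt 11 / 5) ∧
    (∀ θ : ℝ,
      ePow 2 2 (CUgate !![1, 0; 0, Complex.exp ((θ : ℂ) * Complex.I)]) =
        (2 / 9) * ((Real.sin (θ / 2) : ℝ) : ℂ) ^ 2 ∧
      deltaSq 2 2 (CUgate !![1, 0; 0, Complex.exp ((θ : ℂ) * Complex.I)]) =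
        (44 / 2025) * ((Real.sin (θ / 2) : ℝ) : ℂ) ^ 4) := by
  refine ⟨ePow_CUgate hu, deltaSq_CUgate hu, deltaSq_div_ePow_CUgate hu, fun θ => ?_⟩
  have hθ := conjTranspose_mul_self_diag_exp θ
  have he : ePow 2 2 (CUgate !![1, 0; 0, Complex.exp ((θ : ℂ) * Complex.I)]) =
      2 / 9 * ((Real.sin (θ / 2) : ℝ) : ℂ) ^ 2 := by
    have h := congrArg (fun x : ℝ => (x : ℂ)) (one_sub_normSq_trace_diag_exp_div_four θ)
    simp only [Complex.ofReal_sub, Complex.ofReal_one, Complex.ofReal_div, Complex.ofReal_pow,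
      Complex.ofReal_ofNat] at h
    rw [ePow_CUgate hθ, h]
  refine ⟨he, ?_⟩
  rw [deltaSq_CUgate hθ, he]
  ring
end
end

section
/- (Canonical nonlocal gate) For β₁, β₂, β₃ ∈ ℝ, write c± := cos(β₁ ± β₂) and s± := sin(β₁ ± β₂), and let d_χ be the matrix indexed by Fin 2 × Fin 2 which, in the ordered basis (0,0),(0,1),(1,0),(1,1), equals [[e^{−iβ₃}·c₋, 0, 0, −i·e^{−iβ₃}·s₋],[0, e^{iβ₃}·c₊, −i·e^{iβ₃}·s₊, 0],[0, −i·e^{iβ₃}·s₊, e^{iβ₃}·c₊, 0],[−i·e^{−iβ₃}·s₋, 0, 0, e^{−iβ₃}·c₋]]. Then its entangling power is e(d_χ) = (1/18)·(3 − (cos(4β₁)·cos(4β₂) + cos(4β₂)·cos(4β₃) + cos(4β₃)·cos(4β₁))). -/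
noncomputable section

open Matrix
open scoped Kronecker

/-- The canonical nonlocal two-qubit gate `d_χ` with parameters `β₁, β₂, β₃`, in the
ordered basis (0,0),(0,1),(1,0),(1,1). -/
def dChi (β₁ β₂ β₃ : ℝ) : Matrix (Fin 2 × Fin 2) (Fin 2 × Fin 2) ℂ :=
  Matrix.of fun x y =>
    if x.1 = x.2 ∧ y.1 = y.2 then
      (if x = y then Complex.exp (-(β₃ : ℂ) * Complex.I) * ((Real.cos (β₁ - β₂) : ℝ) : ℂ)
       else -Complex.I * Complex.exp (-(β₃ : ℂ) * Complex.I) * ((Real.sin (β₁ - β₂) : ℝ) : ℂ))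
    else if x.1 ≠ x.2 ∧ y.1 ≠ y.2 then
      (if x = y then Complex.exp ((β₃ : ℂ) * Complex.I) * ((Real.cos (β₁ + β₂) : ℝ) : ℂ)
       else -Complex.I * Complex.exp ((β₃ : ℂ) * Complex.I) * ((Real.sin (β₁ + β₂) : ℝ) : ℂ))
    else 0

abbrev I16 := (Fin 2 × Fin 2) × (Fin 2 × Fin 2)

def s13 (y : I16) : I16 := ((y.2.1, y.1.2), (y.1.1, y.2.2))
def s24 (y : I16) : I16 := ((y.1.1, y.2.2), (y.2.1, y.1.2))

lemma mul_T13_apply_s16 (M : Matrix I16 I16 ℂ) (x y : I16) :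
    (M * T13 2 2) x y = M x (s13 y) := by
  rw [Matrix.mul_apply, Finset.sum_eq_single (s13 y)]
  · simp [T13, s13]
  · intro a _ ha
    have : ¬ (a.1.1 = y.2.1 ∧ a.2.1 = y.1.1 ∧ a.1.2 = y.1.2 ∧ a.2.2 = y.2.2) := by
      intro ⟨h1, h2, h3, h4⟩
      exact ha (by simp [s13, Prod.ext_iff, h1, h2, h3, h4])
    simp [T13, this]
  · simp

lemma mul_T24_apply_s16 (M : Matrix I16 I16 ℂ) (x y : I16) :
    (M * T24 2 2) x y = M x (s24 y) := by
  rw [Matrix.mul_apply, Finset.sum_eq_single (s24 y)]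
  · simp [T24, s24]
  · intro a _ ha
    have : ¬ (a.1.2 = y.2.2 ∧ a.2.2 = y.1.2 ∧ a.1.1 = y.1.1 ∧ a.2.1 = y.2.1) := by
      intro ⟨h1, h2, h3, h4⟩
      exact ha (by simp [s24, Prod.ext_iff, h1, h2, h3, h4])
    simp [T24, this]
  · simp

lemma trace_mul_sum (M N : Matrix I16 I16 ℂ) :
    (M * N).trace = ∑ x : I16, ∑ y : I16, M x y * N y x := by
  simp [Matrix.trace, Matrix.diag, Matrix.mul_apply]

lemma decomp (V : Matrix I16 I16 ℂ) :
    V * P13p 2 2 * P24p 2 2 * Vᴴ * P13m 2 2 =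
      (8:ℂ)⁻¹ • ( V*Vᴴ + (V*T13 2 2)*Vᴴ + (V*T24 2 2)*Vᴴ + ((V*T13 2 2)*T24 2 2)*Vᴴ
        - (V)*(Vᴴ*T13 2 2) - (V*T13 2 2)*(Vᴴ*T13 2 2) - (V*T24 2 2)*(Vᴴ*T13 2 2)
        - ((V*T13 2 2)*T24 2 2)*(Vᴴ*T13 2 2) ) := by
  simp only [P13p, P24p, P13m]
  simp only [smul_smul, Matrix.mul_smul, Matrix.smul_mul, mul_add, add_mul, mul_sub, sub_mul,
    mul_one, one_mul, Matrix.mul_assoc]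
  norm_num
  module


set_option maxHeartbeats 0 in
/-- (Canonical nonlocal gate) The entangling power of `d_χ`. -/
theorem ePow_dChi (β₁ β₂ β₃ : ℝ) :
    ePow 2 2 (dChi β₁ β₂ β₃) =
      (1 / 18) * (3 - (((Real.cos (4 * β₁) : ℝ) : ℂ) * ((Real.cos (4 * β₂) : ℝ) : ℂ) +
        ((Real.cos (4 * β₂) : ℝ) : ℂ) * ((Real.cos (4 * β₃) : ℝ) : ℂ) +
        ((Real.cos (4 * β₃) : ℝ) : ℂ) * ((Real.cos (4 * β₁) : ℝ) : ℂ))) := by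
  rw [ePow, decomp]
  rw [Matrix.trace_smul]
  simp only [Matrix.trace_sub, Matrix.trace_add]
  rw [trace_mul_sum (dChi β₁ β₂ β₃ ⊗ₖ dChi β₁ β₂ β₃),
    trace_mul_sum (dChi β₁ β₂ β₃ ⊗ₖ dChi β₁ β₂ β₃ * T13 2 2),
    trace_mul_sum (dChi β₁ β₂ β₃ ⊗ₖ dChi β₁ β₂ β₃ * T24 2 2),
    trace_mul_sum (dChi β₁ β₂ β₃ ⊗ₖ dChi β₁ β₂ β₃ * T13 2 2 * T24 2 2),
    trace_mul_sum (dChi β₁ β₂ β₃ ⊗ₖ dChi β₁ β₂ β₃) ((dChi β₁ β₂ β₃ ⊗ₖ dChi β₁ β₂ β₃)ᴴ * T13 2 2),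
    trace_mul_sum (dChi β₁ β₂ β₃ ⊗ₖ dChi β₁ β₂ β₃ * T13 2 2),
    trace_mul_sum (dChi β₁ β₂ β₃ ⊗ₖ dChi β₁ β₂ β₃ * T24 2 2),
    trace_mul_sum (dChi β₁ β₂ β₃ ⊗ₖ dChi β₁ β₂ β₃ * T13 2 2 * T24 2 2)]
  simp only [mul_T13_apply_s16, mul_T24_apply_s16, Matrix.conjTranspose_apply]
  simp only [Fintype.sum_prod_type, Fin.sum_univ_two, Matrix.kroneckerMap_apply, dChi, s13, s24,
    Matrix.of_apply, _root_.map_mul, _root_.map_neg, Complex.conj_ofReal, Complex.conj_I,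
    mul_neg, neg_mul, neg_neg]
  norm_num
  simp only [← Complex.exp_conj, ← Complex.cos_conj, ← Complex.sin_conj, map_sub, map_add,
    _root_.map_neg, _root_.map_mul, Complex.conj_ofReal, Complex.conj_I,
    mul_neg, neg_mul, neg_neg]
  have e4 : ∀ x : ℝ, Complex.exp (4 * (x:ℂ) * Complex.I) = Complex.exp ((x:ℂ) * Complex.I) ^ 4 := by
    intro x
    rw [show (4:ℂ) * (x:ℂ) * Complex.I
        = ((x:ℂ)*Complex.I) + ((x:ℂ)*Complex.I) + ((x:ℂ)*Complex.I) + ((x:ℂ)*Complex.I) by ring,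
      Complex.exp_add, Complex.exp_add, Complex.exp_add]
    ring
  have e4n : ∀ x : ℝ, Complex.exp (-(4 * (x:ℂ) * Complex.I))
      = Complex.exp (-((x:ℂ) * Complex.I)) ^ 4 := by
    intro x
    rw [show -((4:ℂ) * (x:ℂ) * Complex.I)
        = (-((x:ℂ)*Complex.I)) + (-((x:ℂ)*Complex.I)) + (-((x:ℂ)*Complex.I)) + (-((x:ℂ)*Complex.I)) by ring,
      Complex.exp_add, Complex.exp_add, Complex.exp_add]
    ring
  simp only [Complex.cos, Complex.sin, sub_eq_add_neg, add_mul, neg_mul, neg_add, neg_neg,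
    Complex.exp_add, e4, e4n]
  have hI2 : Complex.I ^ 2 = -1 := Complex.I_sq
  have hI3 : Complex.I ^ 3 = -Complex.I := by rw [pow_succ, hI2]; ring
  have hI4 : Complex.I ^ 4 = 1 := by rw [pow_succ, hI3]; simp [Complex.I_mul_I]
  have hI5 : Complex.I ^ 5 = Complex.I := by rw [pow_succ, hI4]; ring
  have hI6 : Complex.I ^ 6 = -1 := by rw [pow_succ, hI5, Complex.I_mul_I]
  have hI7 : Complex.I ^ 7 = -Complex.I := by rw [pow_succ, hI6]; ring
  have hI8 : Complex.I ^ 8 = 1 := by rw [pow_succ, hI7]; simp [Complex.I_mul_I]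
  have hI9 : Complex.I ^ 9 = Complex.I := by rw [pow_succ, hI8]; ring
  have hI10 : Complex.I ^ 10 = -1 := by rw [pow_succ, hI9, Complex.I_mul_I]
  have hI11 : Complex.I ^ 11 = -Complex.I := by rw [pow_succ, hI10]; ring
  have hI12 : Complex.I ^ 12 = 1 := by rw [pow_succ, hI11]; simp [Complex.I_mul_I]
  have hI13 : Complex.I ^ 13 = Complex.I := by rw [pow_succ, hI12]; ring
  have hI14 : Complex.I ^ 14 = -1 := by rw [pow_succ, hI13, Complex.I_mul_I]
  have hI15 : Complex.I ^ 15 = -Complex.I := by rw [pow_succ, hI14]; ring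
  have hI16 : Complex.I ^ 16 = 1 := by rw [pow_succ, hI15]; simp [Complex.I_mul_I]
  have h1 : Complex.exp ((β₁:ℂ) * Complex.I) * Complex.exp (-((β₁:ℂ) * Complex.I)) = 1 := by
    rw [← Complex.exp_add]; simp
  have h2 : Complex.exp ((β₂:ℂ) * Complex.I) * Complex.exp (-((β₂:ℂ) * Complex.I)) = 1 := by
    rw [← Complex.exp_add]; simp
  have h3 : Complex.exp ((β₃:ℂ) * Complex.I) * Complex.exp (-((β₃:ℂ) * Complex.I)) = 1 := by
    rw [← Complex.exp_add]; simp
  generalize Complex.exp ((β₁:ℂ) * Complex.I) = A at h1 ⊢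
  generalize Complex.exp (-((β₁:ℂ) * Complex.I)) = A1 at h1 ⊢
  generalize Complex.exp ((β₂:ℂ) * Complex.I) = B at h2 ⊢
  generalize Complex.exp (-((β₂:ℂ) * Complex.I)) = B1 at h2 ⊢
  generalize Complex.exp ((β₃:ℂ) * Complex.I) = C at h3 ⊢
  generalize Complex.exp (-((β₃:ℂ) * Complex.I)) = C1 at h3 ⊢
  ring_nf
  simp only [hI2, hI3, hI4, hI5, hI6, hI7, hI8, hI9, hI10, hI11, hI12, hI13, hI14, hI15, hI16]
  linear_combination (((-1/72)*B1^4*C1^4 + (-1/72)*B1^4*C^4 + (1/6)*B^2*B1^2*C^2*C1^2 + (-1/72)*B^4*C1^4 + (-1/72)*B^4*C^4 + (-1/72)*A*A1*B1^4*C1^4 + (-1/72)*A*A1*B1^4*C^4 + (1/6)*A*A1*B^2*B1^2*C^2*C1^2 + (-1/72)*A*A1*B^4*C1^4 + (-1/72)*A*A1*B^4*C^4)) * h1 + (((1/6)*C^2*C1^2 + (1/6)*B*B1*C^2*C1^2 + (-1/72)*A1^4*C1^4 + (-1/72)*A1^4*C^4 + (-1/72)*A1^4*B*B1*C1^4 +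 (-1/72)*A1^4*B*B1*C^4 + (-1/72)*A^4*C1^4 + (-1/72)*A^4*C^4 + (-1/72)*A^4*B*B1*C1^4 + (-1/72)*A^4*B*B1*C^4)) * h2 + (((1/6) + (1/6)*C*C1 + (-1/72)*A1^4*B1^4 + (-1/72)*A1^4*B1^4*C*C1 + (-1/72)*A1^4*B^4 + (-1/72)*A1^4*B^4*C*C1 + (-1/72)*A^4*B1^4 + (-1/72)*A^4*B1^4*C*C1 + (-1/72)*A^4*B^4 + (-1/72)*A^4*B^4*C*C1)) * h3
end
end

section
/- (Entangling power of the generalized CX operation) Let d ≥ 2 and let U_CX be the matrix indexed by Fin d × Fin d with entries U_CX (a,b) (a',b') = 1 if a = a' and b = b' + a (mod d), and 0 otherwise (i.e. U_CX = ∑_{α=0}^{d−1} |α⟩⟨α| ⊗ X^α, where X is the cyclic shift on Fin d). Then U_CX is unitary and its entangling power is e(U_CX) = d·(d−1)/(d+1)². -/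
noncomputable section

open Matrix
open scoped Kronecker

/- ### Auxiliary lemmas -/

lemma eCX_ite_dup {p : Prop} [Decidable p] (a b : ℂ) :
    (if p then (if p then a else b) else b) = if p then a else b := by
  split <;> simp [*]

lemma eCX_solve_add {G : Type*} [AddGroup G] (x y z : G) : (x = y + z) ↔ (y = x - z) := by
  constructor <;> intro h <;> simp [h]

lemma eCX_sum_ite_push {α : Type*} [Fintype α] (p : Prop) [Decidable p] (f : α → ℂ) :
    (∑ i : α, if p then f i else 0) = if p then ∑ i : α, f i else 0 := by
  split <;> simp

lemma eCX_mul_T13 (d : ℕ)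
    (M : Matrix ((Fin d × Fin d) × (Fin d × Fin d)) ((Fin d × Fin d) × (Fin d × Fin d)) ℂ) :
    M * T13 d d = M.submatrix id (fun y => ((y.2.1, y.1.2), (y.1.1, y.2.2))) := by
  ext x ⟨⟨p, q⟩, ⟨r, s⟩⟩
  simp [mul_apply, T13, Fintype.sum_prod_type, ite_and, Finset.sum_ite_eq,
    Finset.sum_ite_eq', mul_ite, mul_one, mul_zero]

lemma eCX_mul_T24 (d : ℕ)
    (M : Matrix ((Fin d × Fin d) × (Fin d × Fin d)) ((Fin d × Fin d) × (Fin d × Fin d)) ℂ) :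
    M * T24 d d = M.submatrix id (fun y => ((y.1.1, y.2.2), (y.2.1, y.1.2))) := by
  ext x ⟨⟨p, q⟩, ⟨r, s⟩⟩
  simp [mul_apply, T24, Fintype.sum_prod_type, ite_and, Finset.sum_ite_eq,
    Finset.sum_ite_eq', mul_ite, mul_one, mul_zero]

lemma eCX_trace_T13 (d : ℕ) [NeZero d] : (T13 d d).trace = (d : ℂ) ^ 3 := by
  simp only [T13, Matrix.trace, Matrix.diag, Matrix.of_apply, Fintype.sum_prod_type,
    and_self, eq_self_iff_true, and_true, true_and, ite_and, eCX_sum_ite_push, eCX_ite_dup,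
    Finset.sum_ite_eq, Finset.sum_ite_eq', Finset.mem_univ, if_true, Finset.sum_const,
    Finset.card_univ, Fintype.card_fin, nsmul_eq_mul, mul_one, eq_comm, mul_ite, mul_zero,
    Fintype.card_prod]
  push_cast [Fintype.card_prod]
  ring

lemma eCX_trace_T24 (d : ℕ) [NeZero d] : (T24 d d).trace = (d : ℂ) ^ 3 := by
  simp only [T24, Matrix.trace, Matrix.diag, Matrix.of_apply, Fintype.sum_prod_type,
    and_self, eq_self_iff_true, and_true, true_and, ite_and, eCX_sum_ite_push, eCX_ite_dup,
    Finset.sum_ite_eq, Finset.sum_ite_eq', Finset.mem_univ, if_true, Finset.sum_const,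
    Finset.card_univ, Fintype.card_fin, nsmul_eq_mul, mul_one, eq_comm, mul_ite, mul_zero,
    Fintype.card_prod]
  push_cast [Fintype.card_prod]
  ring

lemma eCX_trace_T13_T24 (d : ℕ) [NeZero d] : (T13 d d * T24 d d).trace = (d : ℂ) ^ 2 := by
  rw [eCX_mul_T24, Matrix.trace]
  simp only [Matrix.diag, submatrix_apply, id_eq, T13, Matrix.of_apply,
    Fintype.sum_prod_type, and_self, eq_self_iff_true, and_true, true_and, ite_and,
    eCX_sum_ite_push, eCX_ite_dup, Finset.sum_ite_eq, Finset.sum_ite_eq', Finset.mem_univ,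
    if_true, Finset.sum_const, Finset.card_univ, Fintype.card_fin, nsmul_eq_mul, mul_one,
    eq_comm, mul_ite, mul_zero, Fintype.card_prod]
  push_cast [Fintype.card_prod]
  ring

section

variable (d : ℕ) [NeZero d]

def UCX0 (d : ℕ) : Matrix (Fin d × Fin d) (Fin d × Fin d) ℂ :=
  Matrix.of fun x y => if x.1 = y.1 ∧ x.2 = y.2 + x.1 then 1 else 0

lemma eCX_term6 :
    ((UCX0 d ⊗ₖ UCX0 d * T13 d d) * (UCX0 d ⊗ₖ UCX0 d)ᴴ * T13 d d).trace = (d : ℂ) ^ 3 := by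
  rw [eCX_mul_T13, eCX_mul_T13, Matrix.trace]
  simp only [UCX0, Matrix.diag, submatrix_apply, id_eq, mul_apply, conjTranspose_apply,
    kroneckerMap_apply, Matrix.of_apply, Fintype.sum_prod_type,
    apply_ite (star : ℂ → ℂ), star_one, star_zero, ite_mul, mul_ite,
    one_mul, zero_mul, mul_one, mul_zero, ite_and, eCX_solve_add, eCX_sum_ite_push,
    Finset.sum_ite_eq, Finset.sum_ite_eq', Finset.mem_univ, if_true]
  simp only [neg_add_eq_sub, sub_left_inj, sub_right_inj, eq_comm, eCX_ite_dup,
    eCX_sum_ite_push, mul_ite, mul_zero,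
    Finset.sum_ite_eq, Finset.sum_ite_eq', Finset.mem_univ, if_true, Finset.sum_const,
    Finset.card_univ, Fintype.card_fin, nsmul_eq_mul, mul_one]
  push_cast
  ring

lemma eCX_term7 :
    ((UCX0 d ⊗ₖ UCX0 d * T24 d d) * (UCX0 d ⊗ₖ UCX0 d)ᴴ * T13 d d).trace = (d : ℂ) ^ 2 := by
  rw [eCX_mul_T24, eCX_mul_T13, Matrix.trace]
  simp only [UCX0, Matrix.diag, submatrix_apply, id_eq, mul_apply, conjTranspose_apply,
    kroneckerMap_apply, Matrix.of_apply, Fintype.sum_prod_type,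
    apply_ite (star : ℂ → ℂ), star_one, star_zero, ite_mul, mul_ite,
    one_mul, zero_mul, mul_one, mul_zero, ite_and, eCX_solve_add, eCX_sum_ite_push,
    Finset.sum_ite_eq, Finset.sum_ite_eq', Finset.mem_univ, if_true]
  simp only [neg_add_eq_sub, sub_left_inj, sub_right_inj, eq_comm, eCX_ite_dup,
    eCX_sum_ite_push, mul_ite, mul_zero,
    Finset.sum_ite_eq, Finset.sum_ite_eq', Finset.mem_univ, if_true, Finset.sum_const,
    Finset.card_univ, Fintype.card_fin, nsmul_eq_mul, mul_one]
  push_cast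
  ring

lemma eCX_term8 :
    ((UCX0 d ⊗ₖ UCX0 d * T13 d d * T24 d d) * (UCX0 d ⊗ₖ UCX0 d)ᴴ * T13 d d).trace
      = (d : ℂ) ^ 3 := by
  rw [eCX_mul_T13, eCX_mul_T24, eCX_mul_T13, Matrix.trace]
  simp only [UCX0, Matrix.diag, submatrix_apply, id_eq, mul_apply, conjTranspose_apply,
    kroneckerMap_apply, Matrix.of_apply, Fintype.sum_prod_type,
    apply_ite (star : ℂ → ℂ), star_one, star_zero, ite_mul, mul_ite,
    one_mul, zero_mul, mul_one, mul_zero, ite_and, eCX_solve_add, eCX_sum_ite_push,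
    Finset.sum_ite_eq, Finset.sum_ite_eq', Finset.mem_univ, if_true]
  simp only [neg_add_eq_sub, sub_left_inj, sub_right_inj, eq_comm, eCX_ite_dup,
    eCX_sum_ite_push, mul_ite, mul_zero,
    Finset.sum_ite_eq, Finset.sum_ite_eq', Finset.mem_univ, if_true, Finset.sum_const,
    Finset.card_univ, Fintype.card_fin, nsmul_eq_mul, mul_one]
  push_cast
  ring

end

/-- (Entangling power of the generalized CX operation) For `d ≥ 2`, the generalized CX
operation `U_CX (a,b) (a',b') = δ_{a,a'} δ_{b, b'+a}` is unitary and its entangling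
power equals `d(d−1)/(d+1)²`. -/
theorem ePow_generalized_CX (d : ℕ) (hd : 2 ≤ d)
    (UCX : Matrix (Fin d × Fin d) (Fin d × Fin d) ℂ)
    (hUCX : UCX = Matrix.of fun x y => if x.1 = y.1 ∧ x.2 = y.2 + x.1 then 1 else 0) :
    UCXᴴ * UCX = 1 ∧ UCX * UCXᴴ = 1 ∧
    ePow d d UCX = (d : ℂ) * ((d : ℂ) - 1) / ((d : ℂ) + 1) ^ 2 := by
  haveI : NeZero d := ⟨by omega⟩
  have hU : UCX = UCX0 d := hUCX
  have h1 : UCXᴴ * UCX = 1 := by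
    subst hUCX
    ext ⟨a, b⟩ ⟨a', b'⟩
    simp only [mul_apply, Fintype.sum_prod_type, conjTranspose_apply, Matrix.of_apply,
      one_apply, apply_ite (star : ℂ → ℂ), star_one, star_zero, ite_mul, one_mul, zero_mul,
      mul_ite, mul_one, mul_zero, Prod.mk.injEq, Finset.sum_ite_eq', Finset.mem_univ, if_true,
      Finset.sum_ite_eq, ite_and]
    by_cases h : a = a'
    · subst h
      by_cases h2 : b = b'
      · subst h2; simp
      · simp [h2, fun x : Fin d => (show ¬(b + x = b' + x) from fun hc => h2 (by
          exact add_right_cancel hc))]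
        exact fun hc => h2 hc.symm
    · simp [h, Ne.symm h]
  have h2 : UCX * UCXᴴ = 1 := mul_eq_one_comm.mp h1
  refine ⟨h1, h2, ?_⟩
  -- abbreviations
  set V : Matrix ((Fin d × Fin d) × (Fin d × Fin d)) ((Fin d × Fin d) × (Fin d × Fin d)) ℂ :=
    UCX ⊗ₖ UCX with hV
  have hVH : Vᴴ = UCXᴴ ⊗ₖ UCXᴴ := by
    rw [hV]; ext x y; simp [Matrix.conjTranspose_apply, Matrix.kroneckerMap_apply, mul_comm]
  have hVVH : V * Vᴴ = 1 := by
    rw [hV, hVH, ← Matrix.mul_kronecker_mul, h2, Matrix.one_kronecker_one]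
  have hVHV : Vᴴ * V = 1 := by
    rw [hV, hVH, ← Matrix.mul_kronecker_mul, h1, Matrix.one_kronecker_one]
  have htrone : (1 : Matrix ((Fin d × Fin d) × (Fin d × Fin d))
      ((Fin d × Fin d) × (Fin d × Fin d)) ℂ).trace = (d : ℂ) ^ 4 := by
    rw [Matrix.trace_one]
    simp only [Fintype.card_prod, Fintype.card_fin]
    push_cast
    ring
  -- the eight trace terms
  have t1 : (V * Vᴴ).trace = (d : ℂ) ^ 4 := by rw [hVVH, htrone]
  have t2 : (V * T13 d d * Vᴴ).trace = (d : ℂ) ^ 3 := by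
    rw [Matrix.trace_mul_cycle, hVHV, Matrix.one_mul, eCX_trace_T13]
  have t3 : (V * T24 d d * Vᴴ).trace = (d : ℂ) ^ 3 := by
    rw [Matrix.trace_mul_cycle, hVHV, Matrix.one_mul, eCX_trace_T24]
  have t4 : (V * T13 d d * T24 d d * Vᴴ).trace = (d : ℂ) ^ 2 := by
    rw [Matrix.trace_mul_cycle, ← Matrix.mul_assoc, hVHV, Matrix.one_mul, eCX_trace_T13_T24]
  have t5 : (V * Vᴴ * T13 d d).trace = (d : ℂ) ^ 3 := by
    rw [hVVH, Matrix.one_mul, eCX_trace_T13]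
  have t6 : (V * T13 d d * Vᴴ * T13 d d).trace = (d : ℂ) ^ 3 := by
    rw [hV, hU]; exact eCX_term6 d
  have t7 : (V * T24 d d * Vᴴ * T13 d d).trace = (d : ℂ) ^ 2 := by
    rw [hV, hU]; exact eCX_term7 d
  have t8 : (V * T13 d d * T24 d d * Vᴴ * T13 d d).trace = (d : ℂ) ^ 3 := by
    rw [hV, hU]; exact eCX_term8 d
  -- expand the entangling power
  rw [ePow, P13p, P24p, P13m, ← hV]
  simp only [Matrix.mul_smul, Matrix.smul_mul, Matrix.mul_add, Matrix.add_mul,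
    Matrix.mul_sub, Matrix.sub_mul, Matrix.mul_one, Matrix.one_mul, smul_smul,
    Matrix.trace_smul, Matrix.trace_add, Matrix.trace_sub, smul_eq_mul]
  rw [t1, t2, t3, t4, t5, t6, t7, t8]
  have hd0 : (d : ℂ) ≠ 0 := Nat.cast_ne_zero.mpr (by omega)
  have hd1 : (d : ℂ) + 1 ≠ 0 := by
    have : ((d : ℂ) + 1) = ((d + 1 : ℕ) : ℂ) := by push_cast; ring
    rw [this]
    exact Nat.cast_ne_zero.mpr (by omega)
  have hD : ((d : ℂ) * ((d : ℂ) + 1) * (d : ℂ) * ((d : ℂ) + 1)) ≠ 0 :=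
    mul_ne_zero (mul_ne_zero (mul_ne_zero hd0 hd1) hd0) hd1
  rw [div_mul_eq_mul_div, div_eq_div_iff hD (pow_ne_zero 2 hd1)]
  ring
end
end
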